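/- arXiv:1909.11565 — 4 statements merged into one kernel-verified Lean document; each statement's English description precedes it below -/
import Mathlib

section
/- Let G=(V,E) be a simple, connected, d-regular graph and let {x,y}∈E be an edge. If κ_LLY(x,y) > 0, then κ₀(x,y) ≥ 0. -/
open Filter
open scoped Classical

variable {V : Type*}

/-- The probability measure `μ_x^p` with idleness parameter `p`, on a `d`-regular graph:
`μ_x^p(x) = p`, `μ_x^p(z) = (1-p)/d` for `z` adjacent to `x`, and `0` otherwise. -/
noncomputable def muMeasure (G : SimpleGraph V) (d : ℕ) (p : ℝ) (x : V) : V → ℝ :=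
  fun z => if z = x then p else if G.Adj x z then (1 - p) / d else 0

/-- `π` is a transport plan transporting `μ₁` to `μ₂`. -/
def IsTransportPlan (μ₁ μ₂ : V → ℝ) (π : V → V → ℝ) : Prop :=
  (∀ u v, 0 ≤ π u v) ∧ (∀ u, ∑' v, π u v = μ₁ u) ∧ (∀ v, ∑' u, π u v = μ₂ v)

/-- The cost of a transport plan: `∑_{u,v} d(u,v) π(u,v)`. -/
noncomputable def transportCost (G : SimpleGraph V) (π : V → V → ℝ) : ℝ :=
  ∑' q : V × V, (G.dist q.1 q.2 : ℝ) * π q.1 q.2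

/-- The Wasserstein distance `W₁(μ₁, μ₂)`: infimum of costs over all transport plans. -/
noncomputable def W1 (G : SimpleGraph V) (μ₁ μ₂ : V → ℝ) : ℝ :=
  sInf {c : ℝ | ∃ π, IsTransportPlan μ₁ μ₂ π ∧ transportCost G π = c}

/-- The `p`-Ollivier Ricci curvature `κ_p(x,y) = 1 - W₁(μ_x^p, μ_y^p)` in a `d`-regular graph. -/
noncomputable def kappa (G : SimpleGraph V) (d : ℕ) (p : ℝ) (x y : V) : ℝ :=
  1 - W1 G (muMeasure G d p x) (muMeasure G d p y)

/-- The Lin–Lu–Yau curvature `κ_LLY(x,y) = lim_{p→1} κ_p(x,y)/(1-p)`. -/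
noncomputable def kappaLLY (G : SimpleGraph V) (d : ℕ) (x y : V) : ℝ :=
  limUnder (nhdsWithin 1 (Set.Iio (1 : ℝ))) fun p => kappa G d p x y / (1 - p)

/-!
Let `A = N(x)` and `B = N(y)`, both of size `d`. If some bijection `φ : A → B` has
`∑ d(u, φ u) ≤ d`, transporting `μ_x^0` to `μ_y^0` along `φ` costs at most `1`, so `κ₀ ≥ 0`.
Otherwise Egerváry's theorem (integral duality for the assignment problem) yields an integer
`1`-Lipschitz `f` with `∑_B f - ∑_A f > d`, which can be normalised to also satisfy
`f y - f x = 1`. Testing any transport plan against it gives `W₁(μ_x^p, μ_y^p) ≥ p + (1 - p) = 1`,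
so `κ_p ≤ 0` for all `p < 1`. Since `μ^r` is a mixture of `μ^p` and Dirac masses, `κ_p / (1 - p)`
is nondecreasing, hence converges as `p → 1` and its limit `κ_LLY` is at most `0`.
-/

open Finset SimpleGraph

lemma not_summable_of_one_le {ι : Type*} {f : ι → ℝ} {J : Set ι} (hJ : J.Infinite)
    (h : ∀ i ∈ J, 1 ≤ f i) : ¬ Summable f := fun hs =>
  hJ <| (eventually_cofinite.mp (hs.tendsto_cofinite_zero.eventually_lt_const one_pos)).subset
    fun i hi => not_lt.2 (h i hi)

lemma limUnder_nhdsLT_le_of_monotoneOn {f : ℝ → ℝ} {a b c : ℝ} (hab : a < b)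
    (hf : MonotoneOn f (Set.Ico a b)) (hc : ∀ t ∈ Set.Ico a b, f t ≤ c) :
    limUnder (nhdsWithin b (Set.Iio b)) f ≤ c := by
  have hmem : ∀ t < b, max t a ∈ Set.Ico a b := fun t ht => ⟨le_max_right _ _, max_lt ht hab⟩
  set g := fun t => f (max t a)
  have hg : MonotoneOn g (Set.Iio b) := fun s hs t ht hst =>
    hf (hmem s hs) (hmem t ht) (max_le_max hst le_rfl)
  have hgc : ∀ t ∈ g '' Set.Iio b, t ≤ c := by
    rintro _ ⟨t, ht, rfl⟩
    exact hc _ (hmem t ht)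
  have hfg : g =ᶠ[nhdsWithin b (Set.Iio b)] f :=
    eventuallyEq_of_mem (Ioo_mem_nhdsLT hab) fun t ht => by simp [g, max_eq_left ht.1.le]
  rw [((hg.tendsto_nhdsLT ⟨c, hgc⟩).congr' hfg).limUnder_eq]
  exact csSup_le (Set.nonempty_Iio.image g) hgc

lemma sum_le_add_sum_of_eq_zero {ι : Type*} {A B : Finset ι} {g : ι → ℤ} {y : ι}
    (hg : ∀ w, 0 ≤ g w) (hzero : ∀ w ∈ A, w ∉ B → w ≠ y → g w = 0) :
    ∑ w ∈ A, g w ≤ g y + ∑ w ∈ B, g w := by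
  have hAB : ∑ w ∈ A \ B, g w ≤ g y := by
    rw [sum_congr rfl fun w hw => (?_ : g w = if w = y then g w else 0), sum_ite_eq']
    · split_ifs <;> simp [hg y]
    · obtain ⟨hwA, hwB⟩ := mem_sdiff.1 hw
      split_ifs with hwy
      · rfl
      · exact hzero w hwA hwB hwy
  have hAB' : ∑ w ∈ A ∩ B, g w ≤ ∑ w ∈ B, g w :=
    sum_le_sum_of_subset_of_nonneg inter_subset_right fun w _ _ => hg w
  rw [← sum_inter_add_sum_sdiff A B]
  linarith

section Assignment

variable {ι : Type*} {A B : Finset ι} {c : ι → ι → ℤ} {α β : ι → ℤ}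

/-- Dual feasibility for the assignment problem between `A` and `B` with costs `c`. -/
def IsDualFeasible (A B : Finset ι) (c : ι → ι → ℤ) (α β : ι → ℤ) : Prop :=
  ∀ u ∈ A, ∀ v ∈ B, β v - α u ≤ c u v

lemma sum_comp_of_bijOn {M : Type*} [AddCommMonoid M] {φ : ι → ι} (hφ : Set.BijOn φ A B)
    (f : ι → M) : ∑ u ∈ A, f (φ u) = ∑ v ∈ B, f v :=
  sum_nbij φ (fun _ hu => hφ.mapsTo hu) hφ.injOn hφ.surjOn fun _ _ => rfl

lemma exists_bijOn_of_injective (hBA : #B ≤ #A) {f : A → ι} (hf : Function.Injective f)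
    (hfB : ∀ u, f u ∈ B) : ∃ φ : ι → ι, Set.BijOn φ A B ∧ ∀ u : A, φ u = f u := by
  let φ : ι → ι := fun u => if hu : u ∈ A then f ⟨u, hu⟩ else u
  have hφ : ∀ u : A, φ u = f u := fun u => dif_pos u.2
  have hmaps : Set.MapsTo φ A B := fun u hu => hφ ⟨u, hu⟩ ▸ hfB _
  have hinj : Set.InjOn φ A := fun u hu v hv huv =>
    congrArg Subtype.val (hf ((hφ ⟨u, hu⟩).symm.trans (huv.trans (hφ ⟨v, hv⟩))))
  exact ⟨φ, ⟨hmaps, hinj, surjOn_of_injOn_of_card_le φ hmaps hinj hBA⟩, hφ⟩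

lemma IsDualFeasible.sum_sub_sum_le (h : IsDualFeasible A B c α β) {φ : ι → ι}
    (hφ : Set.BijOn φ A B) : ∑ v ∈ B, β v - ∑ u ∈ A, α u ≤ ∑ u ∈ A, c u (φ u) := by
  rw [← sum_comp_of_bijOn hφ, ← sum_sub_distrib]
  exact sum_le_sum fun u hu => h u hu (φ u) (hφ.mapsTo hu)

lemma sum_sub_sum_eq_of_bijOn {φ : ι → ι} (hφ : Set.BijOn φ A B)
    (htight : ∀ u ∈ A, β (φ u) - α u = c u (φ u)) :
    ∑ v ∈ B, β v - ∑ u ∈ A, α u = ∑ u ∈ A, c u (φ u) := by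
  rw [← sum_comp_of_bijOn hφ, ← sum_sub_distrib]
  exact sum_congr rfl htight

/-- Integrality gives every non-tight edge slack at least one, so lowering both potentials by one
on `S` and on `Γ` keeps them feasible. -/
lemma IsDualFeasible.exists_sum_lt (h : IsDualFeasible A B c α β) {S Γ : Finset ι}
    (hSA : S ⊆ A) (hΓB : Γ ⊆ B) (hΓS : #Γ < #S)
    (htight : ∀ u ∈ S, ∀ v ∈ B, β v - α u = c u v → v ∈ Γ) :
    ∃ α' β', IsDualFeasible A B c α' β' ∧
      ∑ v ∈ B, β v - ∑ u ∈ A, α u < ∑ v ∈ B, β' v - ∑ u ∈ A, α' u := by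
  refine ⟨fun u => α u - if u ∈ S then 1 else 0, fun v => β v - if v ∈ Γ then 1 else 0,
    fun u hu v hv => ?_, ?_⟩
  · have hfeas := h u hu v hv
    by_cases huS : u ∈ S <;> by_cases hvΓ : v ∈ Γ <;> simp only [huS, hvΓ, if_true, if_false]
    · omega
    · have hslack : β v - α u ≠ c u v := fun he => hvΓ (htight u huS v hv he)
      omega
    all_goals omega
  · simp only [sum_sub_distrib, sum_boole, filter_mem_eq_inter, inter_eq_right.2 hSA,
      inter_eq_right.2 hΓB]
    omega

lemma IsDualFeasible.exists_tight_or_exists_sum_lt (hAB : #A = #B)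
    (h : IsDualFeasible A B c α β) :
    (∃ φ, Set.BijOn φ A B ∧ ∀ u ∈ A, β (φ u) - α u = c u (φ u)) ∨
    ∃ α' β', IsDualFeasible A B c α' β' ∧
      ∑ v ∈ B, β v - ∑ u ∈ A, α u < ∑ v ∈ B, β' v - ∑ u ∈ A, α' u := by
  set t : A → Finset ι := fun u => B.filter fun v => β v - α u = c u v
  by_cases hHall : ∀ s : Finset A, #s ≤ #(s.biUnion t)
  · obtain ⟨f, hf, hft⟩ := (all_card_le_biUnion_card_iff_exists_injective t).1 hHall
    obtain ⟨φ, hφ, hφf⟩ := exists_bijOn_of_injective hAB.ge hf fun u => (mem_filter.1 (hft u)).1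
    refine .inl ⟨φ, hφ, fun u hu => ?_⟩
    rw [hφf ⟨u, hu⟩]
    exact (mem_filter.1 (hft ⟨u, hu⟩)).2
  · obtain ⟨s, hs⟩ := not_forall.1 hHall
    refine .inr (h.exists_sum_lt (S := s.map (.subtype _)) (Γ := s.biUnion t) ?_ ?_ ?_ ?_)
    · intro u hu
      obtain ⟨⟨u, hu'⟩, -, rfl⟩ := mem_map.1 hu
      exact hu'
    · intro v hv
      obtain ⟨u, -, hv⟩ := mem_biUnion.1 hv
      exact (mem_filter.1 hv).1
    · rw [card_map]
      exact not_le.1 hs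
    · intro u hu v hv htight
      obtain ⟨u', hu', rfl⟩ := mem_map.1 hu
      exact mem_biUnion.2 ⟨u', hu', mem_filter.2 ⟨hv, htight⟩⟩

/-- Egerváry's theorem in complementary-slackness form. -/
lemma IsDualFeasible.exists_tight_bijOn (hAB : #A = #B) (h : IsDualFeasible A B c α β) :
    ∃ α' β' φ, IsDualFeasible A B c α' β' ∧ Set.BijOn φ A B ∧
      ∀ u ∈ A, β' (φ u) - α' u = c u (φ u) := by
  obtain ⟨φ₀, hφ₀, -⟩ := exists_bijOn_of_injective hAB.ge
    (Subtype.val_injective.comp (equivOfCardEq hAB).injective) fun u => (equivOfCardEq hAB u).2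
  -- the dual value is bounded by the cost of `φ₀` and every improvement raises it by at least one
  suffices key : ∀ n : ℕ, ∀ α β, IsDualFeasible A B c α β →
      ∑ u ∈ A, c u (φ₀ u) - (∑ v ∈ B, β v - ∑ u ∈ A, α u) ≤ n →
      ∃ α' β' φ, IsDualFeasible A B c α' β' ∧ Set.BijOn φ A B ∧
        ∀ u ∈ A, β' (φ u) - α' u = c u (φ u) from
    key _ α β h (Int.self_le_toNat _)
  intro n
  induction n with
  | zero =>
    intro α β h hn
    obtain ⟨φ, hφ, htight⟩ | ⟨α', β', h', hlt⟩ := h.exists_tight_or_exists_sum_lt hAB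
    · exact ⟨α, β, φ, h, hφ, htight⟩
    · have := h'.sum_sub_sum_le hφ₀
      omega
  | succ n ih =>
    intro α β h hn
    obtain ⟨φ, hφ, htight⟩ | ⟨α', β', h', hlt⟩ := h.exists_tight_or_exists_sum_lt hAB
    · exact ⟨α, β, φ, h, hφ, htight⟩
    · exact ih α' β' h' (by push_cast at hn; omega)

end Assignment

section Measures

variable (G : SimpleGraph V) (d : ℕ)

lemma muMeasure_nonneg {p : ℝ} (hp₀ : 0 ≤ p) (hp₁ : p ≤ 1) (x z : V) :
    0 ≤ muMeasure G d p x z := by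
  unfold muMeasure
  split_ifs
  · exact hp₀
  · exact div_nonneg (sub_nonneg.2 hp₁) d.cast_nonneg
  · exact le_rfl

lemma muMeasure_one (x : V) : muMeasure G d 1 x = fun z => if z = x then 1 else 0 := by
  ext z
  simp [muMeasure]

lemma muMeasure_convexComb (t p r : ℝ) (x : V) :
    muMeasure G d (t * p + (1 - t) * r) x
      = fun z => t * muMeasure G d p x z + (1 - t) * muMeasure G d r x z := by
  ext z
  unfold muMeasure
  split_ifs <;> ring

lemma muMeasure_zero_eq [G.LocallyFinite] (x : V) :
    muMeasure G d 0 x = fun z => if z ∈ G.neighborFinset x then (1 : ℝ) / d else 0 := by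
  ext z
  by_cases h : z = x
  · subst h
    simp [muMeasure]
  · simp [muMeasure, h]

lemma support_muMeasure_finite [G.LocallyFinite] (p : ℝ) (x : V) :
    (Function.support (muMeasure G d p x)).Finite := by
  refine ((G.neighborSet x).toFinite.insert x).subset fun z hz => ?_
  by_contra hmem
  simp only [Set.mem_insert_iff, mem_neighborSet, not_or] at hmem
  exact hz (by simp [muMeasure, hmem.1, hmem.2])

variable {G d}

lemma tsum_muMeasure [G.LocallyFinite] (hreg : G.IsRegularOfDegree d) (hd : 0 < d) (p : ℝ)
    (x : V) : ∑' z, muMeasure G d p x z = 1 := by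
  have hsupp : ∀ z ∉ insert x (G.neighborFinset x), muMeasure G d p x z = 0 := by
    intro z hz
    simp only [mem_insert, mem_neighborFinset, not_or] at hz
    simp [muMeasure, hz.1, hz.2]
  have hnbr : ∀ z ∈ G.neighborFinset x, muMeasure G d p x z = (1 - p) / d := by
    intro z hz
    rw [mem_neighborFinset] at hz
    simp [muMeasure, hz.ne', hz]
  rw [tsum_eq_sum hsupp, sum_insert (by simp), sum_congr rfl hnbr, sum_const,
    card_neighborFinset_eq_degree, hreg x, nsmul_eq_mul]
  have hx : muMeasure G d p x x = p := if_pos rfl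
  rw [hx]
  field_simp
  ring

lemma sum_muMeasure_mul [Fintype V] [G.LocallyFinite] (p : ℝ) (x : V) (f : V → ℝ) :
    ∑ z, muMeasure G d p x z * f z
      = p * f x + (1 - p) / d * ∑ z ∈ G.neighborFinset x, f z := by
  have hsplit : ∀ z, muMeasure G d p x z * f z
      = (if z = x then p * f x else 0)
        + (if z ∈ G.neighborFinset x then (1 - p) / d * f z else 0) := by
    intro z
    by_cases h : z = x
    · subst h
      simp [muMeasure]
    · by_cases hadj : G.Adj x z <;> simp [muMeasure, h, hadj]
  simp_rw [hsplit]
  rw [sum_add_distrib, sum_ite_eq', sum_ite_mem, univ_inter, mul_sum]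
  simp

end Measures

section Transport

variable (G : SimpleGraph V) {μ₁ μ₂ ν₁ ν₂ : V → ℝ} {π π' : V → V → ℝ}

lemma transportCost_nonneg (hπ : ∀ u v, 0 ≤ π u v) : 0 ≤ transportCost G π :=
  tsum_nonneg fun q => mul_nonneg (Nat.cast_nonneg _) (hπ q.1 q.2)

lemma W1_le_transportCost (hπ : IsTransportPlan μ₁ μ₂ π) : W1 G μ₁ μ₂ ≤ transportCost G π :=
  csInf_le ⟨0, by rintro _ ⟨π, hπ, rfl⟩; exact transportCost_nonneg G hπ.1⟩ ⟨π, hπ, rfl⟩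

lemma le_W1 {c : ℝ} (hne : ∃ π, IsTransportPlan μ₁ μ₂ π)
    (h : ∀ π, IsTransportPlan μ₁ μ₂ π → c ≤ transportCost G π) : c ≤ W1 G μ₁ μ₂ := by
  obtain ⟨π, hπ⟩ := hne
  exact le_csInf ⟨_, π, hπ, rfl⟩ (by rintro _ ⟨π, hπ, rfl⟩; exact h π hπ)

lemma isTransportPlan_mul (h₁ : ∀ u, 0 ≤ μ₁ u) (h₂ : ∀ v, 0 ≤ μ₂ v) (hs₁ : ∑' u, μ₁ u = 1)
    (hs₂ : ∑' v, μ₂ v = 1) : IsTransportPlan μ₁ μ₂ fun u v => μ₁ u * μ₂ v :=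
  ⟨fun u v => mul_nonneg (h₁ u) (h₂ v), fun u => by rw [tsum_mul_left, hs₂, mul_one],
    fun v => by rw [tsum_mul_right, hs₁, one_mul]⟩

lemma exists_isTransportPlan_muMeasure [G.LocallyFinite] {d : ℕ} (hreg : G.IsRegularOfDegree d)
    (hd : 0 < d) {p : ℝ} (hp₀ : 0 ≤ p) (hp₁ : p ≤ 1) (x y : V) :
    ∃ π, IsTransportPlan (muMeasure G d p x) (muMeasure G d p y) π :=
  ⟨_, isTransportPlan_mul (muMeasure_nonneg G d hp₀ hp₁ x) (muMeasure_nonneg G d hp₀ hp₁ y)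
    (tsum_muMeasure hreg hd p x) (tsum_muMeasure hreg hd p y)⟩

/-- On an infinite vertex set, a plan can send unit mass along every pair of vertices outside the
supports: its rows and columns there and its cost are non-summable, and `tsum` assigns them `0`. -/
lemma W1_nonpos_of_infinite [Infinite V] (hconn : G.Connected) (h₁ : ∀ u, 0 ≤ μ₁ u)
    (h₂ : ∀ v, 0 ≤ μ₂ v) (hs₁ : ∑' u, μ₁ u = 1) (hs₂ : ∑' v, μ₂ v = 1)
    (hfin₁ : (Function.support μ₁).Finite) (hfin₂ : (Function.support μ₂).Finite) :
    W1 G μ₁ μ₂ ≤ 0 := by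
  set J := (Function.support μ₁ ∪ Function.support μ₂)ᶜ
  have hJ : J.Infinite := (hfin₁.union hfin₂).infinite_compl
  have hμ₁J : ∀ u ∈ J, μ₁ u = 0 := fun u hu => by simpa [J] using (not_or.1 hu).1
  have hμ₂J : ∀ v ∈ J, μ₂ v = 0 := fun v hv => by simpa [J] using (not_or.1 hv).2
  have hJJ : ∀ u ∈ J, ¬ Summable fun v => if u ∈ J ∧ v ∈ J then (1 : ℝ) else 0 := fun u hu =>
    not_summable_of_one_le hJ fun v hv => by simp [hu, hv]
  set π : V → V → ℝ := fun u v => μ₁ u * μ₂ v + if u ∈ J ∧ v ∈ J then 1 else 0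
  have hplan : IsTransportPlan μ₁ μ₂ π := by
    refine ⟨fun u v => add_nonneg (mul_nonneg (h₁ u) (h₂ v)) (by positivity), fun u => ?_,
      fun v => ?_⟩
    · by_cases hu : u ∈ J
      · simp only [π, hμ₁J u hu, zero_mul, zero_add]
        exact tsum_eq_zero_of_not_summable (hJJ u hu)
      · simp only [π, hu, false_and, if_false, add_zero]
        rw [tsum_mul_left, hs₂, mul_one]
    · by_cases hv : v ∈ J
      · simp only [π, hμ₂J v hv, mul_zero, zero_add]
        exact tsum_eq_zero_of_not_summable fun hs =>
          not_summable_of_one_le hJ (fun u hu => by simp [hu, hv]) hs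
      · simp only [π, hv, and_false, if_false, add_zero]
        rw [tsum_mul_right, hs₁, one_mul]
  have hcost : transportCost G π = 0 := by
    obtain ⟨u₀, hu₀⟩ := hJ.nonempty
    refine tsum_eq_zero_of_not_summable fun hs => ?_
    have hrow := hs.comp_injective (i := fun v : V => (u₀, v)) fun v w h => congrArg Prod.snd h
    refine not_summable_of_one_le (hJ.sdiff (Set.finite_singleton u₀)) (fun v hv => ?_) hrow
    have hdist : (1 : ℝ) ≤ G.dist u₀ v := by
      exact_mod_cast hconn.pos_dist_of_ne (Ne.symm hv.2)
    have hπ : (1 : ℝ) ≤ π u₀ v := by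
      simp [π, hu₀, hv.1, hμ₁J u₀ hu₀]
    exact one_le_mul_of_one_le_of_one_le hdist hπ
  exact hcost ▸ W1_le_transportCost G hplan

lemma transportCost_eq_sum [Fintype V] (π : V → V → ℝ) :
    transportCost G π = ∑ u, ∑ v, (G.dist u v : ℝ) * π u v := by
  rw [transportCost, tsum_fintype, Fintype.sum_prod_type]

lemma sum_mul_sub_sum_mul_le_transportCost [Fintype V] (F : V → ℝ)
    (hF : ∀ u v, F v - F u ≤ G.dist u v) (hπ : IsTransportPlan μ₁ μ₂ π) :
    ∑ v, μ₂ v * F v - ∑ u, μ₁ u * F u ≤ transportCost G π := by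
  obtain ⟨hpos, hrow, hcol⟩ := hπ
  simp only [tsum_fintype] at hrow hcol
  calc ∑ v, μ₂ v * F v - ∑ u, μ₁ u * F u = ∑ u, ∑ v, (F v - F u) * π u v := by
        simp only [← hrow, ← hcol, sum_mul, sub_mul, sum_sub_distrib]
        rw [sum_comm]
        simp only [mul_comm]
    _ ≤ transportCost G π := by
        rw [transportCost_eq_sum]
        gcongr with u _ v _
        exacts [hpos u v, hF u v]

lemma IsTransportPlan.convexComb [Fintype V] (hπ : IsTransportPlan μ₁ μ₂ π)
    (hπ' : IsTransportPlan ν₁ ν₂ π') {t : ℝ} (ht₀ : 0 ≤ t) (ht₁ : t ≤ 1) :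
    IsTransportPlan (fun u => t * μ₁ u + (1 - t) * ν₁ u) (fun v => t * μ₂ v + (1 - t) * ν₂ v)
      (fun u v => t * π u v + (1 - t) * π' u v) := by
  obtain ⟨hpos, hrow, hcol⟩ := hπ
  obtain ⟨hpos', hrow', hcol'⟩ := hπ'
  simp only [tsum_fintype] at *
  refine ⟨fun u v => ?_, fun u => ?_, fun v => ?_⟩
  · have := hpos u v
    have := hpos' u v
    have : 0 ≤ 1 - t := sub_nonneg.2 ht₁
    positivity
  · rw [tsum_fintype, sum_add_distrib, ← mul_sum, ← mul_sum, hrow, hrow']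
  · rw [tsum_fintype, sum_add_distrib, ← mul_sum, ← mul_sum, hcol, hcol']

lemma transportCost_convexComb [Fintype V] (t : ℝ) :
    transportCost G (fun u v => t * π u v + (1 - t) * π' u v)
      = t * transportCost G π + (1 - t) * transportCost G π' := by
  simp only [transportCost_eq_sum, mul_sum, ← sum_add_distrib]
  congr! 2
  ring

lemma W1_convexComb_le [Fintype V] {t : ℝ} (ht₀ : 0 < t) (ht₁ : t ≤ 1)
    (hne : ∃ π, IsTransportPlan μ₁ μ₂ π) (hπ' : IsTransportPlan ν₁ ν₂ π') :
    W1 G (fun u => t * μ₁ u + (1 - t) * ν₁ u) (fun v => t * μ₂ v + (1 - t) * ν₂ v)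
      ≤ t * W1 G μ₁ μ₂ + (1 - t) * transportCost G π' := by
  have h : (W1 G (fun u => t * μ₁ u + (1 - t) * ν₁ u) (fun v => t * μ₂ v + (1 - t) * ν₂ v)
      - (1 - t) * transportCost G π') / t ≤ W1 G μ₁ μ₂ := by
    refine le_W1 G hne fun π hπ => ?_
    have := W1_le_transportCost G (hπ.convexComb hπ' ht₀.le ht₁)
    rw [transportCost_convexComb] at this
    rw [div_le_iff₀ ht₀]
    linarith
  rw [div_le_iff₀ ht₀] at h
  linarith

lemma isTransportPlan_single (x y : V) :
    IsTransportPlan (fun u => if u = x then 1 else 0) (fun v => if v = y then 1 else 0)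
      (fun u v => if u = x ∧ v = y then 1 else 0) := by
  refine ⟨fun u v => by positivity, fun u => ?_, fun v => ?_⟩
  · by_cases hu : u = x <;> simp [hu]
  · by_cases hv : v = y <;> simp [hv]

lemma transportCost_single (x y : V) :
    transportCost G (fun u v => if u = x ∧ v = y then 1 else 0) = G.dist x y := by
  have : ∀ q : V × V, (G.dist q.1 q.2 : ℝ) * (if q.1 = x ∧ q.2 = y then 1 else 0)
      = if q = (x, y) then (G.dist x y : ℝ) else 0 := by
    rintro ⟨u, v⟩
    by_cases h : u = x ∧ v = y
    · simp [h.1, h.2]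
    · simp only [Prod.mk.injEq, if_neg h, mul_zero]
  rw [transportCost, tsum_congr this, tsum_ite_eq]

end Transport

section Matching

variable (G : SimpleGraph V) [Fintype V] {A B : Finset V} {φ : V → V}

lemma isTransportPlan_of_bijOn (hφ : Set.BijOn φ A B) {w : ℝ} (hw : 0 ≤ w) :
    IsTransportPlan (fun u => if u ∈ A then w else 0) (fun v => if v ∈ B then w else 0)
      (fun u v => if u ∈ A ∧ v = φ u then w else 0) := by
  refine ⟨fun u v => by positivity, fun u => ?_, fun v => ?_⟩
  · by_cases hu : u ∈ A <;> simp [hu, tsum_fintype]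
  · simp only [tsum_fintype, ite_and, sum_ite_mem, univ_inter]
    rw [sum_comp_of_bijOn hφ fun v' => if v = v' then w else 0, sum_ite_eq]

lemma transportCost_of_bijOn (w : ℝ) :
    transportCost G (fun u v => if u ∈ A ∧ v = φ u then w else 0)
      = w * ∑ u ∈ A, (G.dist u (φ u) : ℝ) := by
  have hrow : ∀ u, ∑ v, (G.dist u v : ℝ) * (if u ∈ A ∧ v = φ u then w else 0)
      = if u ∈ A then w * G.dist u (φ u) else 0 := fun u => by
    by_cases hu : u ∈ A <;> simp [hu, mul_comm]
  rw [transportCost_eq_sum, sum_congr rfl fun u _ => hrow u, sum_ite_mem, univ_inter, mul_sum]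

variable {G} [G.LocallyFinite] {d : ℕ}

lemma W1_muMeasure_zero_le_one (hd : 0 < d) {x y : V}
    (hφ : Set.BijOn φ (G.neighborFinset x) (G.neighborFinset y))
    (hcost : ∑ u ∈ G.neighborFinset x, G.dist u (φ u) ≤ d) :
    W1 G (muMeasure G d 0 x) (muMeasure G d 0 y) ≤ 1 := by
  have hdR : (0 : ℝ) < d := Nat.cast_pos.2 hd
  rw [muMeasure_zero_eq, muMeasure_zero_eq]
  have hw : (0 : ℝ) ≤ 1 / d := by positivity
  calc _ ≤ _ := W1_le_transportCost G (isTransportPlan_of_bijOn hφ hw)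
    _ = 1 / d * ∑ u ∈ G.neighborFinset x, (G.dist u (φ u) : ℝ) := transportCost_of_bijOn G _
    _ ≤ 1 / d * d := by gcongr; exact_mod_cast hcost
    _ = 1 := by field_simp

end Matching

section Curvature

variable {G : SimpleGraph V} [G.LocallyFinite] {d : ℕ}

lemma kappa_div_one_sub_monotoneOn [Fintype V] (hreg : G.IsRegularOfDegree d) (hd : 0 < d)
    {x y : V} (hxy : G.Adj x y) :
    MonotoneOn (fun p => kappa G d p x y / (1 - p)) (Set.Ico 0 1) := by
  rintro p ⟨hp₀, hp₁⟩ r ⟨hr₀, hr₁⟩ hpr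
  have h1p : 0 < 1 - p := sub_pos.2 hp₁
  have h1r : 0 < 1 - r := sub_pos.2 hr₁
  set t := (1 - r) / (1 - p) with ht
  have ht₀ : 0 < t := div_pos h1r h1p
  have ht₁ : t ≤ 1 := (div_le_one h1p).2 (by linarith)
  have h1rt : 1 - r = t * (1 - p) := by rw [ht]; field_simp
  -- `μ_r` is the mixture of `μ_p` and the Dirac mass `μ_1`, which costs `d(x,y) = 1` to transport
  have hW : W1 G (muMeasure G d r x) (muMeasure G d r y)
      ≤ t * W1 G (muMeasure G d p x) (muMeasure G d p y) + (1 - t) := by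
    have hr : r = t * p + (1 - t) * 1 := by linarith
    have := W1_convexComb_le G ht₀ ht₁ (exists_isTransportPlan_muMeasure G hreg hd hp₀ hp₁.le x y)
      (isTransportPlan_single x y)
    rw [transportCost_single, dist_eq_one_iff_adj.2 hxy, Nat.cast_one, mul_one] at this
    rwa [hr, muMeasure_convexComb, muMeasure_convexComb, muMeasure_one, muMeasure_one]
  show kappa G d p x y / (1 - p) ≤ kappa G d r x y / (1 - r)
  rw [div_le_div_iff₀ h1p h1r, h1rt]
  unfold kappa
  nlinarith

lemma kappaLLY_nonpos_of_forall_kappa_nonpos [Fintype V] (hreg : G.IsRegularOfDegree d)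
    (hd : 0 < d) {x y : V} (hxy : G.Adj x y) (h : ∀ p ∈ Set.Ico (0 : ℝ) 1, kappa G d p x y ≤ 0) :
    kappaLLY G d x y ≤ 0 :=
  limUnder_nhdsLT_le_of_monotoneOn one_pos (kappa_div_one_sub_monotoneOn hreg hd hxy)
    fun p hp => div_nonpos_of_nonpos_of_nonneg (h p hp) (sub_nonneg.2 hp.2.le)

lemma kappa_nonpos_of_lipschitz [Fintype V] (hreg : G.IsRegularOfDegree d) (hd : 0 < d)
    {x y : V} {F : V → ℝ} (hF : ∀ u v, F v - F u ≤ G.dist u v) (hFxy : 1 ≤ F y - F x)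
    (hFsum : d ≤ ∑ v ∈ G.neighborFinset y, F v - ∑ u ∈ G.neighborFinset x, F u) {p : ℝ}
    (hp₀ : 0 ≤ p) (hp₁ : p ≤ 1) : kappa G d p x y ≤ 0 := by
  have hdR : (0 : ℝ) < d := Nat.cast_pos.2 hd
  have hW : 1 ≤ W1 G (muMeasure G d p x) (muMeasure G d p y) := by
    refine le_W1 G (exists_isTransportPlan_muMeasure G hreg hd hp₀ hp₁ x y) fun π hπ => ?_
    have hdual := sum_mul_sub_sum_mul_le_transportCost G F hF hπ
    rw [sum_muMeasure_mul, sum_muMeasure_mul] at hdual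
    have h1p : 0 ≤ (1 - p) / d := div_nonneg (sub_nonneg.2 hp₁) hdR.le
    calc (1 : ℝ) = p * 1 + (1 - p) / d * d := by field_simp; ring
      _ ≤ p * (F y - F x) + (1 - p) / d *
          (∑ v ∈ G.neighborFinset y, F v - ∑ u ∈ G.neighborFinset x, F u) := by gcongr
      _ ≤ transportCost G π := by linarith
  unfold kappa
  linarith

end Curvature

section Certificate

variable {G : SimpleGraph V}

lemma exists_lipschitz_of_isDualFeasible (hconn : G.Connected) {A B : Finset V}
    (hA : A.Nonempty) {α β : V → ℤ} (h : IsDualFeasible A B (fun u v => G.dist u v) α β) :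
    ∃ f : V → ℤ, (∀ u v, f v - f u ≤ G.dist u v) ∧ (∀ u ∈ A, f u ≤ α u) ∧
      ∀ v ∈ B, β v ≤ f v := by
  refine ⟨fun w => A.inf' hA fun u => α u + G.dist u w, fun u v => ?_, fun u hu => ?_,
    fun v hv => le_inf' hA _ fun u hu => by have := h u hu v hv; simp only at this; omega⟩
  · obtain ⟨u₀, hu₀, hmin⟩ := A.exists_mem_eq_inf' hA fun z => α z + (G.dist z u : ℤ)
    have h₁ := inf'_le (fun z => α z + (G.dist z v : ℤ)) hu₀
    have h₂ : (G.dist u₀ v : ℤ) ≤ G.dist u₀ u + G.dist u v := by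
      exact_mod_cast hconn.dist_triangle
    simp only at hmin h₁ ⊢
    omega
  · have := inf'_le (fun z => α z + (G.dist z u : ℤ)) hu
    simpa only [dist_self, Nat.cast_zero, add_zero] using this

/-- Integral Kantorovich duality for uniform measures on `A` and `B`. -/
lemma exists_lipschitz_of_forall_bijOn (hconn : G.Connected) {A B : Finset V}
    (hA : A.Nonempty) (hAB : #A = #B) {m : ℤ}
    (h : ∀ φ, Set.BijOn φ A B → m < ∑ u ∈ A, (G.dist u (φ u) : ℤ)) :
    ∃ f : V → ℤ, (∀ u v, f v - f u ≤ G.dist u v) ∧ m < ∑ v ∈ B, f v - ∑ u ∈ A, f u := by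
  have h₀ : IsDualFeasible A B (fun u v => G.dist u v) 0 0 := fun u _ v _ => by simp
  obtain ⟨α, β, φ, hfeas, hφ, htight⟩ := h₀.exists_tight_bijOn hAB
  obtain ⟨f, hf, hfA, hfB⟩ := exists_lipschitz_of_isDualFeasible hconn hA hfeas
  have hval := sum_sub_sum_eq_of_bijOn (c := fun u v => G.dist u v) hφ htight
  have hA' := sum_le_sum hfA
  have hB' := sum_le_sum hfB
  exact ⟨f, hf, by linarith [h φ hφ]⟩

variable [G.LocallyFinite] {d : ℕ}

lemma sum_sub_sum_le_of_lipschitz (hreg : G.IsRegularOfDegree d) {f : V → ℤ}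
    (hf : ∀ u v, f v - f u ≤ G.dist u v) (x y : V) :
    ∑ v ∈ G.neighborFinset y, f v - ∑ u ∈ G.neighborFinset x, f u ≤ d * (f y - f x + 2) := by
  have hB := sum_le_card_nsmul (G.neighborFinset y) f (f y + 1) fun v hv => by
    have := hf y v
    rw [dist_eq_one_iff_adj.2 ((mem_neighborFinset G y v).1 hv)] at this
    omega
  have hA := card_nsmul_le_sum (G.neighborFinset x) f (f x - 1) fun u hu => by
    have := hf u x
    rw [dist_eq_one_iff_adj.2 ((mem_neighborFinset G x u).1 hu).symm] at this
    omega
  rw [card_neighborFinset_eq_degree, hreg, nsmul_eq_mul] at hA hB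
  linarith

/-- Raising `f` to `max f (f x + 1 - d(·, y))` makes `F y - F x = 1`; on `N(x)` this changes only
`y` and the common neighbours of `x` and `y`, which also lie in `N(y)`. -/
lemma exists_lipschitz_sub_eq_one (hconn : G.Connected) (hreg : G.IsRegularOfDegree d)
    {x y : V} (hxy : G.Adj x y) {f : V → ℤ} (hf : ∀ u v, f v - f u ≤ G.dist u v)
    (hfsum : d < ∑ v ∈ G.neighborFinset y, f v - ∑ u ∈ G.neighborFinset x, f u) :
    ∃ F : V → ℤ, (∀ u v, F v - F u ≤ G.dist u v) ∧ F y - F x = 1 ∧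
      d ≤ ∑ v ∈ G.neighborFinset y, F v - ∑ u ∈ G.neighborFinset x, F u := by
  have hdxy : G.dist x y = 1 := dist_eq_one_iff_adj.2 hxy
  have htri : ∀ u v w, (G.dist u w : ℤ) ≤ G.dist u v + G.dist v w := fun u v w => by
    exact_mod_cast hconn.dist_triangle
  have hyx_le : f y - f x ≤ 1 := by have := hf x y; rw [hdxy] at this; omega
  have hyx_ge : 0 ≤ f y - f x := by
    have := sum_sub_sum_le_of_lipschitz hreg hf x y
    by_contra hneg
    nlinarith
  set F : V → ℤ := fun w => max (f w) (f x + 1 - G.dist w y)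
  have hFy : F y = f x + 1 := by simp only [F, dist_self, Nat.cast_zero, sub_zero]; omega
  have hFx : F x = f x := by simp [F, hdxy]
  have hF : ∀ u v, F v - F u ≤ G.dist u v := fun u v => by
    have := hf u v
    have := htri u v y
    simp only [F]
    omega
  have hzero : ∀ w ∈ G.neighborFinset x, w ∉ G.neighborFinset y → w ≠ y → F w - f w = 0 := by
    intro w hwx hwy hne
    rw [mem_neighborFinset] at hwx hwy
    have h2 : 2 ≤ G.dist w y := by
      have h0 : G.dist w y ≠ 0 := fun h => hne (hconn.dist_eq_zero_iff.1 h)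
      have h1 : G.dist w y ≠ 1 := fun h => hwy (dist_eq_one_iff_adj.1 h).symm
      omega
    have := hf w x
    rw [dist_eq_one_iff_adj.2 hwx.symm] at this
    simp only [F]
    omega
  have hmod := sum_le_add_sum_of_eq_zero (fun w => sub_nonneg.2 (le_max_left _ (_ : ℤ))) hzero
  simp only [sum_sub_distrib] at hmod
  exact ⟨F, hF, by omega, by linarith⟩

end Certificate

theorem kappa_zero_nonneg_of_kappaLLY_pos [Fintype V] {G : SimpleGraph V} [G.LocallyFinite]
    (hconn : G.Connected) {d : ℕ} (hreg : G.IsRegularOfDegree d) (hd : 0 < d) {x y : V}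
    (hxy : G.Adj x y) (h : 0 < kappaLLY G d x y) : 0 ≤ kappa G d 0 x y := by
  have hcard : ∀ z, #(G.neighborFinset z) = d := fun z =>
    (card_neighborFinset_eq_degree G z).trans (hreg z)
  by_cases hcheap : ∃ φ, Set.BijOn φ (G.neighborFinset x) (G.neighborFinset y) ∧
      ∑ u ∈ G.neighborFinset x, G.dist u (φ u) ≤ d
  · obtain ⟨φ, hφ, hcost⟩ := hcheap
    exact sub_nonneg.2 (W1_muMeasure_zero_le_one hd hφ hcost)
  obtain ⟨f, hf, hfsum⟩ := exists_lipschitz_of_forall_bijOn hconn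
    ⟨y, (mem_neighborFinset G x y).2 hxy⟩ ((hcard x).trans (hcard y).symm) (m := d)
    fun φ hφ => by exact_mod_cast not_le.1 fun hle => hcheap ⟨φ, hφ, hle⟩
  obtain ⟨F, hF, hFxy, hFsum⟩ := exists_lipschitz_sub_eq_one hconn hreg hxy hf hfsum
  refine absurd h (not_lt.2 (kappaLLY_nonpos_of_forall_kappa_nonpos hreg hd hxy fun p hp => ?_))
  refine kappa_nonpos_of_lipschitz hreg hd (F := fun w => F w) (fun u v => ?_) ?_ ?_ hp.1 hp.2.le
  · exact_mod_cast hF u v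
  · exact_mod_cast hFxy.ge
  · exact_mod_cast hFsum

/-- In a simple, connected, `d`-regular graph, `κ_LLY(x,y) > 0` implies
`κ₀(x,y) ≥ 0` for every edge `{x,y}`. -/
theorem stmt_0 (G : SimpleGraph V) [G.LocallyFinite] (hconn : G.Connected)
    (d : ℕ) (hreg : G.IsRegularOfDegree d) (x y : V) (hxy : G.Adj x y)
    (h : 0 < kappaLLY G d x y) : 0 ≤ kappa G d 0 x y := by
  have hd : 0 < d := hreg x ▸ (G.degree_pos_iff_exists_adj x).2 ⟨y, hxy⟩
  cases finite_or_infinite V with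
  | inl _ =>
    have := Fintype.ofFinite V
    exact kappa_zero_nonneg_of_kappaLLY_pos hconn hreg hd hxy h
  | inr _ =>
    refine sub_nonneg.2 ((W1_nonpos_of_infinite G hconn ?_ ?_ (tsum_muMeasure hreg hd 0 x)
      (tsum_muMeasure hreg hd 0 y) (support_muMeasure_finite G d 0 x)
      (support_muMeasure_finite G d 0 y)).trans zero_le_one)
    exacts [muMeasure_nonneg G d le_rfl zero_le_one x, muMeasure_nonneg G d le_rfl zero_le_one y]
end

section
/- Let G=(V,E) be a simple, connected, d-regular graph. If a vertex x∈V is Ricci flat, then Γ₂(f)(x) ≥ 0 for every function f:V→ℝ; in particular, the Bakry–Émery curvature satisfies K_∞(x) ≥ 0. -/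
open Filter
open scoped Classical

variable {V : Type*}

/-- The (non-normalized) graph Laplacian `Δf(x) = ∑_{y ∼ x} (f(y) - f(x))`. -/
noncomputable def graphLap (G : SimpleGraph V) [G.LocallyFinite] (f : V → ℝ) (x : V) : ℝ :=
  ∑ y ∈ G.neighborFinset x, (f y - f x)

/-- The operator `Γ`: `2Γ(f,g) = Δ(fg) - fΔg - gΔf`. -/
noncomputable def gammaOp (G : SimpleGraph V) [G.LocallyFinite] (f g : V → ℝ) (x : V) : ℝ :=
  (graphLap G (fun z => f z * g z) x - f x * graphLap G g x - g x * graphLap G f x) / 2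

/-- The operator `Γ₂`: `2Γ₂(f) = ΔΓ(f) - 2Γ(f, Δf)`, where `Γ(f) = Γ(f,f)`. -/
noncomputable def gamma2Op (G : SimpleGraph V) [G.LocallyFinite] (f : V → ℝ) (x : V) : ℝ :=
  (graphLap G (fun z => gammaOp G f f z) x - 2 * gammaOp G f (graphLap G f) x) / 2

/-- The set of lower Bakry–Émery curvature bounds at `x`: all `K` such that
`Γ₂(f)(x) ≥ K·Γ(f)(x)` for every `f : V → ℝ`.  The Bakry–Émery curvature `K_∞(x)` is the
largest element of this set. -/
def curvBounds (G : SimpleGraph V) [G.LocallyFinite] (x : V) : Set ℝ :=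
  {K : ℝ | ∀ f : V → ℝ, K * gammaOp G f f x ≤ gamma2Op G f x}

/-- The closed ball of radius 1 around `x`. -/
def closedBall1 (G : SimpleGraph V) (x : V) : Set V := insert x (G.neighborSet x)

/-- The maps `η_i : B₁(x) → V`, `1 ≤ i ≤ d`, witness Ricci flatness at `x`:
(i) `η_i(u) ∼ u` for all `u ∈ B₁(x)`; (ii) `η_i(u) ≠ η_j(u)` for `i ≠ j`;
(iii) `⋃_j η_j(η_i(x)) = ⋃_j η_i(η_j(x))` for all `i`. -/
def IsRicciFlatMaps (G : SimpleGraph V) (d : ℕ) (x : V) (η : Fin d → V → V) : Prop :=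
  (∀ i, ∀ u ∈ closedBall1 G x, G.Adj u (η i u)) ∧
  (∀ i j, i ≠ j → ∀ u ∈ closedBall1 G x, η i u ≠ η j u) ∧
  (∀ i, Set.range (fun j => η j (η i x)) = Set.range (fun j => η i (η j x)))

/-- `x` is Ricci flat. -/
def RicciFlatAt (G : SimpleGraph V) (d : ℕ) (x : V) : Prop :=
  ∃ η : Fin d → V → V, IsRicciFlatMaps G d x η

/-- `x` is (R)-Ricci flat: in addition `η_i(η_i(x)) = x` for all `i`. -/
def RRicciFlatAt (G : SimpleGraph V) (d : ℕ) (x : V) : Prop :=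
  ∃ η : Fin d → V → V, IsRicciFlatMaps G d x η ∧ ∀ i, η i (η i x) = x

/-- `x` is (S)-Ricci flat: in addition `η_j(η_i(x)) = η_i(η_j(x))` for all `i, j`. -/
def SRicciFlatAt (G : SimpleGraph V) (d : ℕ) (x : V) : Prop :=
  ∃ η : Fin d → V → V, IsRicciFlatMaps G d x η ∧ ∀ i j, η j (η i x) = η i (η j x)

/-- `x` is (RS)-Ricci flat: both additional conditions hold simultaneously. -/
def RSRicciFlatAt (G : SimpleGraph V) (d : ℕ) (x : V) : Prop :=
  ∃ η : Fin d → V → V, IsRicciFlatMaps G d x η ∧ (∀ i, η i (η i x) = x) ∧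
    (∀ i j, η j (η i x) = η i (η j x))

/-! At a Ricci-flat vertex `x` the maps `η_i` enumerate the neighbours of every vertex of
`B₁(x)`, and condition (iii) lets one list the neighbours of `η_i(x)` as `η_i(η_j(x))`.
Expanding `Γ₂(f)(x)` in these coordinates, with `a_i = f(η_i x) - f(x)` and
`g_ij = f(η_i η_j x) - f(x)`, all cross terms cancel because `(g_ij)` has equal row and column
sums (again by (iii)), which leaves
`4 Γ₂(f)(x) = ∑_{i,j} (f(η_i η_j x) - f(η_i x) - f(η_j x) + f(x))² ≥ 0`. -/

theorem sum_comp_eq_sum_comp_of_range_eq {ι α M : Type*} [Fintype ι] [AddCommMonoid M]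
    {e e' : ι → α} (he : Function.Injective e) (h : Set.range e = Set.range e') (F : α → M) :
    ∑ i, F (e i) = ∑ i, F (e' i) := by
  choose σ hσ using fun j => h.symm.subset (Set.mem_range_self j)
  have hsurj : Function.Surjective σ := fun i => by
    obtain ⟨j, hj⟩ := h.subset (Set.mem_range_self i)
    exact ⟨j, he ((hσ j).trans hj)⟩
  rw [← (Finite.surjective_iff_bijective.mp hsurj).sum_comp (fun i => F (e i))]
  simp only [hσ]

theorem SimpleGraph.sum_neighborFinset_eq_sum_of_injective {M : Type*} [AddCommMonoid M]
    (G : SimpleGraph V) [G.LocallyFinite] {u : V} {ι : Type*} [Fintype ι] {e : ι → V}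
    (he : Function.Injective e) (hadj : ∀ i, G.Adj u (e i)) (hdeg : G.degree u = Fintype.card ι)
    (F : V → M) : ∑ y ∈ G.neighborFinset u, F y = ∑ i, F (e i) := by
  have hnbr : Finset.univ.map ⟨e, he⟩ = G.neighborFinset u :=
    Finset.eq_of_subset_of_card_le
      (fun v hv => by
        obtain ⟨i, -, rfl⟩ := Finset.mem_map.mp hv
        exact (G.mem_neighborFinset u _).mpr (hadj i))
      (by rw [Finset.card_map, Finset.card_univ, G.card_neighborFinset_eq_degree, hdeg])
  rw [← hnbr, Finset.sum_map]
  rfl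

theorem gammaOp_eq_sum_neighborFinset (G : SimpleGraph V) [G.LocallyFinite] (f g : V → ℝ)
    (x : V) :
    gammaOp G f g x = (∑ y ∈ G.neighborFinset x, (f y - f x) * (g y - g x)) / 2 := by
  unfold gammaOp graphLap
  rw [Finset.mul_sum, Finset.mul_sum, ← Finset.sum_sub_distrib, ← Finset.sum_sub_distrib]
  congr 1
  exact Finset.sum_congr rfl fun y _ => by ring

theorem sum_sub_two_mul_sum_eq_sum_sq {ι : Type*} [Fintype ι] (a : ι → ℝ) (g : ι → ι → ℝ)
    (hg : ∀ j, ∑ i, g i j = ∑ i, g j i) :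
    ∑ i, (∑ j, (g i j - a i) ^ 2 - ∑ j, a j ^ 2)
        - 2 * ∑ i, a i * (∑ j, (g i j - a i) - ∑ j, a j)
      = ∑ i, ∑ j, (g i j - a i - a j) ^ 2 := by
  have hcross : ∑ i, ∑ j, a j * g i j = ∑ i, ∑ j, a i * g i j := by
    rw [Finset.sum_comm]
    simp only [← Finset.mul_sum, hg]
  have hsq : ∑ _i : ι, ∑ j, a j ^ 2 = ∑ i, ∑ _j : ι, a i ^ 2 := by
    rw [Finset.sum_comm]
  -- pointwise the difference of the two sides is `2 (a j - a i) (g i j - a i - a j)`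
  have hdiff : ∑ i, ∑ j, (a j - a i) * (g i j - a i - a j) = 0 := by
    have e : ∀ i j, (a j - a i) * (g i j - a i - a j)
        = (a j * g i j - a i * g i j) - (a j ^ 2 - a i ^ 2) := fun i j => by ring
    simp only [e, Finset.sum_sub_distrib, hcross, hsq, sub_self]
  calc _ = ∑ i, ∑ j, ((g i j - a i - a j) ^ 2 + 2 * ((a j - a i) * (g i j - a i - a j))) := by
        simp only [Finset.mul_sum, ← Finset.sum_sub_distrib]
        exact Finset.sum_congr rfl fun i _ => Finset.sum_congr rfl fun j _ => by ring
    _ = _ := by simp only [Finset.sum_add_distrib, ← Finset.mul_sum, hdiff, mul_zero, add_zero]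

namespace IsRicciFlatMaps

variable {G : SimpleGraph V} {d : ℕ} {x u : V} {η : Fin d → V → V}

theorem self_mem_closedBall1 : x ∈ closedBall1 G x := Set.mem_insert _ _

theorem apply_mem_closedBall1 (h : IsRicciFlatMaps G d x η) (i : Fin d) :
    η i x ∈ closedBall1 G x :=
  Set.mem_insert_of_mem _ (h.1 i x self_mem_closedBall1)

theorem injective_apply (h : IsRicciFlatMaps G d x η) (hu : u ∈ closedBall1 G x) :
    Function.Injective fun i => η i u := fun i j hij =>
  by_contra fun hne => h.2.1 i j hne u hu hij

theorem sum_comp_swap {M : Type*} [AddCommMonoid M] (h : IsRicciFlatMaps G d x η) (i : Fin d)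
    (F : V → M) : ∑ j, F (η j (η i x)) = ∑ j, F (η i (η j x)) :=
  sum_comp_eq_sum_comp_of_range_eq (h.injective_apply (h.apply_mem_closedBall1 i)) (h.2.2 i) F

variable [G.LocallyFinite]

theorem sum_neighborFinset {M : Type*} [AddCommMonoid M] (h : IsRicciFlatMaps G d x η)
    (hreg : G.IsRegularOfDegree d) (hu : u ∈ closedBall1 G x) (F : V → M) :
    ∑ y ∈ G.neighborFinset u, F y = ∑ i, F (η i u) :=
  G.sum_neighborFinset_eq_sum_of_injective (h.injective_apply hu) (fun i => h.1 i u hu)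
    (by rw [hreg u, Fintype.card_fin]) F

theorem graphLap_eq_sum (h : IsRicciFlatMaps G d x η) (hreg : G.IsRegularOfDegree d)
    (hu : u ∈ closedBall1 G x) (F : V → ℝ) : graphLap G F u = ∑ i, (F (η i u) - F u) :=
  h.sum_neighborFinset hreg hu fun y => F y - F u

theorem gammaOp_eq_sum (h : IsRicciFlatMaps G d x η) (hreg : G.IsRegularOfDegree d)
    (hu : u ∈ closedBall1 G x) (f g : V → ℝ) :
    gammaOp G f g u = (∑ i, (f (η i u) - f u) * (g (η i u) - g u)) / 2 := by
  rw [gammaOp_eq_sum_neighborFinset,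
    h.sum_neighborFinset hreg hu fun y => (f y - f u) * (g y - g u)]

theorem four_mul_gamma2Op_eq (h : IsRicciFlatMaps G d x η) (hreg : G.IsRegularOfDegree d)
    (f : V → ℝ) :
    4 * gamma2Op G f x = ∑ i, ∑ j, (f (η i (η j x)) - f (η i x) - f (η j x) + f x) ^ 2 := by
  set a : Fin d → ℝ := fun i => f (η i x) - f x with ha
  set g : Fin d → Fin d → ℝ := fun i j => f (η i (η j x)) - f x with hg
  have hx := self_mem_closedBall1 (G := G) (x := x)
  have hΓ : ∀ i, gammaOp G f f (η i x) - gammaOp G f f x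
      = (∑ j, (g i j - a i) ^ 2 - ∑ j, a j ^ 2) / 2 := fun i => by
    rw [h.gammaOp_eq_sum hreg (h.apply_mem_closedBall1 i), h.gammaOp_eq_sum hreg hx,
      h.sum_comp_swap i fun v => (f v - f (η i x)) * (f v - f (η i x)), ← sub_div]
    simp only [ha, hg, sub_sub_sub_cancel_right, sq]
  have hΔ : ∀ i, graphLap G f (η i x) - graphLap G f x = ∑ j, (g i j - a i) - ∑ j, a j :=
    fun i => by
      rw [h.graphLap_eq_sum hreg (h.apply_mem_closedBall1 i), h.graphLap_eq_sum hreg hx,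
        h.sum_comp_swap i fun v => f v - f (η i x)]
      simp only [ha, hg, sub_sub_sub_cancel_right]
  have hcol : ∀ j, ∑ i, g i j = ∑ i, g j i := fun j =>
    h.sum_comp_swap j fun v => f v - f x
  calc 4 * gamma2Op G f x
      = 2 * ∑ i, (gammaOp G f f (η i x) - gammaOp G f f x)
          - 2 * ∑ i, a i * (graphLap G f (η i x) - graphLap G f x) := by
        rw [gamma2Op, h.graphLap_eq_sum hreg hx, h.gammaOp_eq_sum hreg hx f (graphLap G f)]
        ring
    _ = ∑ i, (∑ j, (g i j - a i) ^ 2 - ∑ j, a j ^ 2)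
          - 2 * ∑ i, a i * (∑ j, (g i j - a i) - ∑ j, a j) := by
        simp only [hΓ, hΔ, ← Finset.sum_div]
        ring
    _ = ∑ i, ∑ j, (g i j - a i - a j) ^ 2 := sum_sub_two_mul_sum_eq_sum_sq a g hcol
    _ = _ := Finset.sum_congr rfl fun i _ => Finset.sum_congr rfl fun j _ => by
        simp only [ha, hg]
        ring

theorem gamma2Op_nonneg (h : IsRicciFlatMaps G d x η) (hreg : G.IsRegularOfDegree d)
    (f : V → ℝ) : 0 ≤ gamma2Op G f x := by
  have h4 : 0 ≤ 4 * gamma2Op G f x := by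
    rw [h.four_mul_gamma2Op_eq hreg f]
    positivity
  linarith

end IsRicciFlatMaps

theorem stmt_4_general (G : SimpleGraph V) [G.LocallyFinite]
    (d : ℕ) (hreg : G.IsRegularOfDegree d) (x : V) (hx : RicciFlatAt G d x) :
    (∀ f : V → ℝ, 0 ≤ gamma2Op G f x) ∧ 0 ∈ curvBounds G x := by
  obtain ⟨η, h⟩ := hx
  have hnonneg := h.gamma2Op_nonneg hreg
  exact ⟨hnonneg, fun f => (zero_mul (gammaOp G f f x)).symm ▸ hnonneg f⟩

/-- In a simple, connected, `d`-regular graph, if `x` is Ricci flat then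
`Γ₂(f)(x) ≥ 0` for every `f : V → ℝ`; in particular the Bakry–Émery curvature satisfies
`K_∞(x) ≥ 0` (that is, `0` is a lower curvature bound at `x`). -/
theorem stmt_4 (G : SimpleGraph V) [G.LocallyFinite] (hconn : G.Connected)
    (d : ℕ) (hreg : G.IsRegularOfDegree d) (x : V) (hx : RicciFlatAt G d x) :
    (∀ f : V → ℝ, 0 ≤ gamma2Op G f x) ∧ 0 ∈ curvBounds G x :=
  stmt_4_general G d hreg x hx
end

section
/- Let G=(V,E) be a simple, connected, d-regular graph and let x∈V be a vertex not contained in a triangle (i.e., no two neighbours of x are adjacent) with d_x^-(z) ≤ 2 for all z∈S₂(x). If κ₀(x,y) = 0 for all y∈S₁(x), then the Bakry–Émery curvature satisfies K_∞(x) ≥ 0. -/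
open Filter
open scoped Classical

variable {V : Type*}

/-!
For a `d`-regular graph one has
`4 Γ₂(f)(x) = ∑_{y ∼ x} ∑_{w ∼ y} (f w + f x - 2 f y)² - ∑_{y, u ∼ x} (f y - f u)²`,
so it suffices to dominate the second double sum by the first.

Call neighbours `y, u` of `x` linked if they have a common neighbour in `S₂(x)`. Charge each
linked pair to such a common neighbour `w`; as `w` has at most two neighbours in `S₁(x)`, the pairs
charged to `w` contribute at most `∑_{y ∼ w, y ∼ x} (f w + f x - 2 f y)²`.

The hypothesis `κ₀(x, y) = 0` says `W₁(μ_x⁰, μ_y⁰) = 1`. If `y` had two unlinked partners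
`u₁, u₂`, each would have to send its mass `1/d` over distance at least `2`, except for what
it sends to `x`, which receives only `1/d` in total; this forces `W₁ ≥ 1 + 1/d`. Hence the
unlinked pairs form a partial matching of `S₁(x)` and contribute at most
`4 ∑_{y ∼ x} (f y - f x)²`, which are exactly the terms `w = x` of the first double sum.
-/

open Finset

section SumsOfSquares

variable {ι : Type*}

theorem Finset.sum_sum_sq_sub_eq (s : Finset ι) (a : ι → ℝ) :
    ∑ i ∈ s, ∑ j ∈ s, (a i - a j) ^ 2 = 2 * #s * ∑ i ∈ s, a i ^ 2 - 2 * (∑ i ∈ s, a i) ^ 2 := by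
  simp only [sub_sq, sum_add_distrib, sum_sub_distrib, ← mul_sum, ← sum_mul, sum_const,
    nsmul_eq_mul]
  ring

theorem Finset.sum_sum_sq_sub_le_of_card_le_two {s : Finset ι} (hs : #s ≤ 2) (a : ι → ℝ)
    (c : ℝ) : ∑ i ∈ s, ∑ j ∈ s, (a i - a j) ^ 2 ≤ ∑ i ∈ s, (c - 2 * a i) ^ 2 := by
  classical
  interval_cases h : #s
  · simp [card_eq_zero.1 h]
  · obtain ⟨i, rfl⟩ := card_eq_one.1 h
    simpa using sq_nonneg _
  · obtain ⟨i, j, hij, rfl⟩ := card_eq_two.1 h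
    simp only [sum_pair hij, sub_self]
    nlinarith [sq_nonneg (c - a i - a j)]

theorem Finset.sum_sq_sub_le_of_injOn {s : Finset ι} {P : Finset (ι × ι)} (hP : P ⊆ s ×ˢ s)
    (h₁ : Set.InjOn Prod.fst (P : Set (ι × ι))) (h₂ : Set.InjOn Prod.snd (P : Set (ι × ι)))
    (a : ι → ℝ) :
    ∑ p ∈ P, (a p.1 - a p.2) ^ 2 ≤ 4 * ∑ i ∈ s, a i ^ 2 := by
  classical
  have hproj : ∀ g : ι × ι → ι, Set.InjOn g P → (∀ p ∈ P, g p ∈ s) →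
      ∑ p ∈ P, a (g p) ^ 2 ≤ ∑ i ∈ s, a i ^ 2 := fun g hg hgs => by
    rw [← sum_image (f := fun i => a i ^ 2) hg]
    exact sum_le_sum_of_subset_of_nonneg (image_subset_iff.2 hgs) fun _ _ _ => sq_nonneg _
  calc ∑ p ∈ P, (a p.1 - a p.2) ^ 2 ≤ ∑ p ∈ P, (2 * a p.1 ^ 2 + 2 * a p.2 ^ 2) :=
        sum_le_sum fun p _ => by nlinarith [sq_nonneg (a p.1 + a p.2)]
    _ ≤ 4 * ∑ i ∈ s, a i ^ 2 := by
        rw [sum_add_distrib, ← mul_sum, ← mul_sum]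
        linarith [hproj Prod.fst h₁ fun p hp => (mem_product.1 (hP hp)).1,
          hproj Prod.snd h₂ fun p hp => (mem_product.1 (hP hp)).2]

end SumsOfSquares

section Transport

variable {G : SimpleGraph V} {μ₁ μ₂ : V → ℝ} {π : V → V → ℝ}

/-- `transportCost` is a `tsum`, hence `0` for plans whose cost is not summable. -/
def HasSummableCost (G : SimpleGraph V) (π : V → V → ℝ) : Prop :=
  Summable fun q : V × V => (G.dist q.1 q.2 : ℝ) * π q.1 q.2

theorem HasSummableCost.flip (hc : HasSummableCost G π) : HasSummableCost G (flip π) := by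
  refine ((Equiv.prodComm V V).summable_iff.2 hc).congr fun q => ?_
  simp [SimpleGraph.dist_comm, _root_.flip]

theorem HasSummableCost.summable_apply (hconn : G.Connected) (hπ : ∀ u v, 0 ≤ π u v)
    (hc : HasSummableCost G π) (u : V) : Summable (π u) := by
  refine ((hc.comp_injective (Prod.mk_right_injective u)).add
    (hasSum_ite_eq u (π u u)).summable).of_nonneg_of_le (hπ u) fun v => ?_
  by_cases h : v = u
  · subst h
    simp
  · have : (1 : ℝ) ≤ G.dist u v := by exact_mod_cast hconn.pos_dist_of_ne (Ne.symm h)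
    simpa [h] using le_mul_of_one_le_left (hπ u v) this

theorem IsTransportPlan.flip (h : IsTransportPlan μ₁ μ₂ π) :
    IsTransportPlan μ₂ μ₁ (flip π) :=
  ⟨fun u v => h.1 v u, h.2.2, h.2.1⟩

theorem IsTransportPlan.eq_zero_of_left (h : IsTransportPlan μ₁ μ₂ π) (hconn : G.Connected)
    (hc : HasSummableCost G π) {u : V} (hu : μ₁ u = 0) (v : V) : π u v = 0 := by
  have := (hc.summable_apply hconn h.1 u).le_tsum v fun w _ => h.1 u w
  exact le_antisymm (by rwa [h.2.1 u, hu] at this) (h.1 u v)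

theorem IsTransportPlan.eq_zero_of_right (h : IsTransportPlan μ₁ μ₂ π) (hconn : G.Connected)
    (hc : HasSummableCost G π) {v : V} (hv : μ₂ v = 0) (u : V) : π u v = 0 :=
  h.flip.eq_zero_of_left hconn hc.flip hv u

theorem IsTransportPlan.sum_right_eq (h : IsTransportPlan μ₁ μ₂ π) (hconn : G.Connected)
    (hc : HasSummableCost G π) {t : Finset V} (ht : ∀ v ∉ t, μ₂ v = 0) (u : V) :
    ∑ v ∈ t, π u v = μ₁ u := by
  rw [← h.2.1 u, tsum_eq_sum fun v hv => h.eq_zero_of_right hconn hc (ht v hv) u]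

theorem IsTransportPlan.sum_left_eq (h : IsTransportPlan μ₁ μ₂ π) (hconn : G.Connected)
    (hc : HasSummableCost G π) {s : Finset V} (hs : ∀ u ∉ s, μ₁ u = 0) (v : V) :
    ∑ u ∈ s, π u v = μ₂ v :=
  h.flip.sum_right_eq hconn hc.flip hs v

theorem IsTransportPlan.transportCost_eq_sum (h : IsTransportPlan μ₁ μ₂ π)
    (hconn : G.Connected) (hc : HasSummableCost G π) {s t : Finset V}
    (hs : ∀ u ∉ s, μ₁ u = 0) (ht : ∀ v ∉ t, μ₂ v = 0) :
    transportCost G π = ∑ u ∈ s, ∑ v ∈ t, (G.dist u v : ℝ) * π u v := by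
  rw [transportCost, tsum_eq_sum (s := s ×ˢ t), sum_product]
  intro q hq
  rcases not_and_or.1 (mem_product.not.1 hq) with hq | hq
  · simp [h.eq_zero_of_left hconn hc (hs _ hq)]
  · simp [h.eq_zero_of_right hconn hc (ht _ hq)]

theorem exists_isTransportPlan_transportCost_lt (hpos : 0 < W1 G μ₁ μ₂) {b : ℝ}
    (hb : W1 G μ₁ μ₂ < b) :
    ∃ π, IsTransportPlan μ₁ μ₂ π ∧ HasSummableCost G π ∧ transportCost G π < b := by
  set C := {c : ℝ | ∃ π, IsTransportPlan μ₁ μ₂ π ∧ transportCost G π = c}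
  have hbdd : BddBelow C := ⟨0, by
    rintro _ ⟨π, hπ, rfl⟩
    exact tsum_nonneg fun q => mul_nonneg (Nat.cast_nonneg _) (hπ.1 _ _)⟩
  have hne : C.Nonempty := by
    by_contra h
    simp [W1, C, Set.not_nonempty_iff_eq_empty.1 h] at hpos
  obtain ⟨_, ⟨π, hπ, rfl⟩, hlt⟩ := (csInf_lt_iff hbdd hne).1 hb
  refine ⟨π, hπ, ?_, hlt⟩
  by_contra hns
  have : W1 G μ₁ μ₂ ≤ transportCost G π := csInf_le hbdd ⟨π, hπ, rfl⟩
  rw [transportCost, tsum_eq_zero_of_not_summable hns] at this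
  linarith

end Transport

section Graph

variable {G : SimpleGraph V}

theorem muMeasure_zero_apply (d : ℕ) (x z : V) :
    muMeasure G d 0 x z = if G.Adj x z then (d : ℝ)⁻¹ else 0 := by
  unfold muMeasure
  split_ifs with h₁ h₂ <;> simp_all

def ShareNeighborInSphereTwo (G : SimpleGraph V) (x y u : V) : Prop :=
  ∃ w, G.dist x w = 2 ∧ G.Adj y w ∧ G.Adj u w

theorem shareNeighborInSphereTwo_comm {x y u : V} :
    ShareNeighborInSphereTwo G x y u ↔ ShareNeighborInSphereTwo G x u y :=
  ⟨fun ⟨w, hw, hy, hu⟩ => ⟨w, hw, hu, hy⟩, fun ⟨w, hw, hu, hy⟩ => ⟨w, hw, hy, hu⟩⟩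

theorem SimpleGraph.dist_eq_two_of_adj_of_adj {x y w : V} (hxy : G.Adj x y) (hyw : G.Adj y w)
    (hwx : w ≠ x) (hxw : ¬G.Adj x w) : G.dist x w = 2 := by
  have hle : G.dist x w ≤ 2 := by
    simpa using G.dist_le (.cons hxy (.cons hyw .nil))
  have h₀ : G.dist x w ≠ 0 := fun h =>
    hwx ((hxy.reachable.trans hyw.reachable).dist_eq_zero_iff.1 h).symm
  have h₁ : G.dist x w ≠ 1 := mt G.dist_eq_one_iff_adj.1 hxw
  omega

end Graph

section LocallyFinite

variable {G : SimpleGraph V} [G.LocallyFinite]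

theorem muMeasure_zero_eq_zero_of_notMem {d : ℕ} {x z : V} (hz : z ∉ G.neighborFinset x) :
    muMeasure G d 0 x z = 0 := by
  rw [muMeasure_zero_apply, if_neg ((G.mem_neighborFinset x z).not.1 hz)]

theorem one_add_card_sub_one_div_le_transportCost (hconn : G.Connected) {d : ℕ}
    (hreg : G.IsRegularOfDegree d) {x y : V} (hxy : G.Adj x y)
    (htri : ∀ u v : V, G.Adj x u → G.Adj x v → ¬G.Adj u v) {B : Finset V}
    (hB : B ⊆ G.neighborFinset x)
    (hfar : ∀ u ∈ B, ∀ v ∈ (G.neighborFinset y).erase x, 2 ≤ G.dist u v) {π : V → V → ℝ}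
    (hπ : IsTransportPlan (muMeasure G d 0 x) (muMeasure G d 0 y) π)
    (hc : HasSummableCost G π) :
    1 + (#B - 1 : ℝ) / d ≤ transportCost G π := by
  set s := G.neighborFinset x
  set t := G.neighborFinset y
  have hd : (d : ℝ) ≠ 0 := by
    rw [← hreg x, Nat.cast_ne_zero, ← G.card_neighborFinset_eq_degree]
    exact (card_pos.2 ⟨y, (G.mem_neighborFinset x y).2 hxy⟩).ne'
  have hs : ∀ u ∉ s, muMeasure G d 0 x u = 0 := fun _ => muMeasure_zero_eq_zero_of_notMem
  have ht : ∀ v ∉ t, muMeasure G d 0 y v = 0 := fun _ => muMeasure_zero_eq_zero_of_notMem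
  have hrow : ∀ u ∈ s, ∑ v ∈ t, π u v = (d : ℝ)⁻¹ := fun u hu => by
    rw [hπ.sum_right_eq hconn hc ht, muMeasure_zero_apply, if_pos ((G.mem_neighborFinset x u).1 hu)]
  have hcol : ∑ u ∈ s, π u x = (d : ℝ)⁻¹ := by
    rw [hπ.sum_left_eq hconn hc hs, muMeasure_zero_apply, if_pos hxy.symm]
  have hmass : ∑ u ∈ s, ∑ v ∈ t, π u v = 1 := by
    rw [sum_congr rfl hrow, sum_const, G.card_neighborFinset_eq_degree, hreg x, nsmul_eq_mul,
      mul_inv_cancel₀ hd]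
  have hdist : ∀ u ∈ s, ∀ v ∈ t, (1 : ℝ) ≤ G.dist u v := fun u hu v hv => by
    refine Nat.one_le_cast.2 (hconn.pos_dist_of_ne ?_)
    rintro rfl
    exact htri y u hxy ((G.mem_neighborFinset x u).1 hu) ((G.mem_neighborFinset y u).1 hv)
  have hfar_row : ∀ u ∈ B, (d : ℝ)⁻¹ - π u x ≤ ∑ v ∈ t, ((G.dist u v : ℝ) - 1) * π u v :=
    fun u hu => by
    have hxt : x ∈ t := (G.mem_neighborFinset y x).2 hxy.symm
    rw [← hrow u (hB hu), ← sum_erase_eq_sub hxt]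
    calc ∑ v ∈ t.erase x, π u v ≤ ∑ v ∈ t.erase x, ((G.dist u v : ℝ) - 1) * π u v :=
          sum_le_sum fun v hv => le_mul_of_one_le_left (hπ.1 u v) <| by
            have : (2 : ℝ) ≤ G.dist u v := by exact_mod_cast hfar u hu v hv
            linarith
      _ ≤ ∑ v ∈ t, ((G.dist u v : ℝ) - 1) * π u v :=
          sum_le_sum_of_subset_of_nonneg (erase_subset x t) fun v hv _ =>
            mul_nonneg (by linarith [hdist u (hB hu) v hv]) (hπ.1 u v)
  calc 1 + (#B - 1 : ℝ) / d = 1 + (#B * (d : ℝ)⁻¹ - ∑ u ∈ s, π u x) := by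
        rw [hcol]; field_simp
    _ ≤ 1 + ∑ u ∈ B, ((d : ℝ)⁻¹ - π u x) := by
        rw [sum_sub_distrib, sum_const, nsmul_eq_mul]
        gcongr
        exact fun u _ _ => hπ.1 u x
    _ ≤ 1 + ∑ u ∈ B, ∑ v ∈ t, ((G.dist u v : ℝ) - 1) * π u v := by
        gcongr with u hu
        exact hfar_row u hu
    _ ≤ 1 + ∑ u ∈ s, ∑ v ∈ t, ((G.dist u v : ℝ) - 1) * π u v := by
        gcongr
        exact fun u hu _ => sum_nonneg fun v hv =>
          mul_nonneg (by linarith [hdist u hu v hv]) (hπ.1 u v)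
    _ = transportCost G π := by
        simp only [sub_one_mul, sum_sub_distrib, hmass, hπ.transportCost_eq_sum hconn hc hs ht]
        ring

theorem card_filter_not_shareNeighborInSphereTwo_le_one (hconn : G.Connected) {d : ℕ}
    (hreg : G.IsRegularOfDegree d) {x y : V}
    (htri : ∀ u v : V, G.Adj x u → G.Adj x v → ¬G.Adj u v) (hxy : G.Adj x y)
    (hk : kappa G d 0 x y = 0) :
    #{u ∈ G.neighborFinset x | ¬ShareNeighborInSphereTwo G x y u} ≤ 1 := by
  by_contra! hB
  set B := {u ∈ G.neighborFinset x | ¬ShareNeighborInSphereTwo G x y u}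
  have hfar : ∀ u ∈ B, ∀ v ∈ (G.neighborFinset y).erase x, 2 ≤ G.dist u v := by
    intro u hu v hv
    obtain ⟨hxu, hu⟩ := mem_filter.1 hu
    obtain ⟨hvx, hyv⟩ := mem_erase.1 hv
    rw [SimpleGraph.mem_neighborFinset] at hxu hyv
    have hne : u ≠ v := by
      rintro rfl
      exact htri y u hxy hxu hyv
    have hnadj : ¬G.Adj u v := fun huv =>
      hu ⟨v, G.dist_eq_two_of_adj_of_adj hxy hyv hvx (htri y v hxy · hyv), hyv, huv⟩
    have hpos := hconn.pos_dist_of_ne hne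
    have hne_one := mt G.dist_eq_one_iff_adj.1 hnadj
    omega
  have hd : (0 : ℝ) < d := by
    rw [← hreg x, ← G.card_neighborFinset_eq_degree]
    exact_mod_cast one_pos.trans (hB.trans_le (card_le_card (filter_subset _ _)))
  have hW : W1 G (muMeasure G d 0 x) (muMeasure G d 0 y) = 1 := by
    rw [kappa] at hk
    linarith
  obtain ⟨π, hπ, hc, hlt⟩ := exists_isTransportPlan_transportCost_lt (hW ▸ one_pos)
    (hW ▸ lt_add_of_pos_right 1 (inv_pos.2 hd))
  have hle := one_add_card_sub_one_div_le_transportCost hconn hreg hxy htri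
    (filter_subset _ _) hfar hπ hc
  have hcard : (1 : ℝ) ≤ #B - 1 := by
    rw [le_sub_iff_add_le]
    exact_mod_cast hB
  have hgap : (d : ℝ)⁻¹ ≤ (#B - 1 : ℝ) / d := by
    rw [inv_eq_one_div]
    gcongr
  linarith

theorem two_mul_gammaOp (f g : V → ℝ) (u : V) :
    2 * gammaOp G f g u = ∑ w ∈ G.neighborFinset u, (f w - f u) * (g w - g u) := by
  rw [gammaOp, graphLap, graphLap, graphLap, mul_div_cancel₀ _ two_ne_zero, mul_sum, mul_sum,
    ← sum_sub_distrib, ← sum_sub_distrib]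
  exact sum_congr rfl fun w _ => by ring

theorem two_mul_gammaOp_sub_mul_graphLap {d : ℕ} (hreg : G.IsRegularOfDegree d)
    (f : V → ℝ) (y : V) (c : ℝ) :
    2 * gammaOp G f f y - 2 * (f y - c) * graphLap G f y
      = ∑ w ∈ G.neighborFinset y, (f w + c - 2 * f y) ^ 2 - d * (f y - c) ^ 2 := by
  rw [two_mul_gammaOp, graphLap, mul_sum, ← sum_sub_distrib, ← hreg y,
    ← G.card_neighborFinset_eq_degree, ← nsmul_eq_mul, ← sum_const, ← sum_sub_distrib]
  exact sum_congr rfl fun w _ => by ring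

theorem four_mul_gamma2Op {d : ℕ} (hreg : G.IsRegularOfDegree d) (f : V → ℝ) (x : V) :
    4 * gamma2Op G f x
      = ∑ y ∈ G.neighborFinset x, ∑ w ∈ G.neighborFinset y, (f w + f x - 2 * f y) ^ 2
        - ∑ y ∈ G.neighborFinset x, ∑ u ∈ G.neighborFinset x, (f y - f u) ^ 2 := by
  set N := G.neighborFinset x
  have hsplit : 4 * gamma2Op G f x
      = ∑ y ∈ N, (2 * gammaOp G f f y - 2 * (f y - f x) * graphLap G f y)
        - ∑ y ∈ N, (2 * gammaOp G f f x - 2 * (f y - f x) * graphLap G f x) := by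
    have hΔΓ : graphLap G (fun z => gammaOp G f f z) x
        = ∑ y ∈ N, (gammaOp G f f y - gammaOp G f f x) := rfl
    have hterms : ∑ y ∈ N, ((2 * gammaOp G f f y - 2 * (f y - f x) * graphLap G f y)
          - (2 * gammaOp G f f x - 2 * (f y - f x) * graphLap G f x))
        = 2 * ∑ y ∈ N, (gammaOp G f f y - gammaOp G f f x)
          - 2 * ∑ y ∈ N, (f y - f x) * (graphLap G f y - graphLap G f x) := by
      rw [mul_sum, mul_sum, ← sum_sub_distrib]
      exact sum_congr rfl fun _ _ => by ring
    rw [← sum_sub_distrib, hterms, ← two_mul_gammaOp, gamma2Op, hΔΓ]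
    ring
  have hcenter : ∑ y ∈ N, (2 * gammaOp G f f x - 2 * (f y - f x) * graphLap G f x)
      = d * ∑ y ∈ N, (f y - f x) ^ 2 - 2 * (∑ y ∈ N, (f y - f x)) ^ 2 := by
    have hΓ : 2 * gammaOp G f f x = ∑ y ∈ N, (f y - f x) ^ 2 := by
      simp only [two_mul_gammaOp, sq, N]
    rw [sum_sub_distrib, sum_const, G.card_neighborFinset_eq_degree, hreg x, nsmul_eq_mul, hΓ,
      ← sum_mul, ← mul_sum, graphLap]
    ring
  have hsq := sum_sum_sq_sub_eq N fun y => f y - f x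
  simp only [sub_sub_sub_cancel_right] at hsq
  rw [hsplit, hcenter, hsq,
    sum_congr rfl fun y _ => two_mul_gammaOp_sub_mul_graphLap hreg f y (f x),
    sum_sub_distrib, ← mul_sum, G.card_neighborFinset_eq_degree, hreg x]
  ring

theorem sum_filter_shareNeighborInSphereTwo_le {x : V}
    (hin : ∀ z : V, G.dist x z = 2 → (G.neighborSet z ∩ G.neighborSet x).ncard ≤ 2)
    (f : V → ℝ) :
    ∑ p ∈ G.neighborFinset x ×ˢ G.neighborFinset x with ShareNeighborInSphereTwo G x p.1 p.2,
        (f p.1 - f p.2) ^ 2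
      ≤ ∑ y ∈ G.neighborFinset x, ∑ w ∈ G.neighborFinset y with G.dist x w = 2,
        (f w + f x - 2 * f y) ^ 2 := by
  set N := G.neighborFinset x
  set Z := N.biUnion fun y => {w ∈ G.neighborFinset y | G.dist x w = 2}
  set M : V → Finset V := fun w => {y ∈ N | G.Adj y w}
  have hZ : ∀ w ∈ Z, G.dist x w = 2 := fun w hw => by
    obtain ⟨_, _, hw⟩ := mem_biUnion.1 hw
    exact (mem_filter.1 hw).2
  have hM : ∀ w ∈ Z, #(M w) ≤ 2 := fun w hw => by
    have hset : G.neighborSet w ∩ G.neighborSet x = (M w : Set V) := by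
      ext y
      simp [M, N, G.adj_comm w y, and_comm]
    simpa [hset] using hin w (hZ w hw)
  calc ∑ p ∈ N ×ˢ N with ShareNeighborInSphereTwo G x p.1 p.2, (f p.1 - f p.2) ^ 2
      ≤ ∑ p ∈ N ×ˢ N with ShareNeighborInSphereTwo G x p.1 p.2,
          ∑ w ∈ Z with G.Adj p.1 w ∧ G.Adj p.2 w, (f p.1 - f p.2) ^ 2 := by
        refine sum_le_sum fun p hp => ?_
        obtain ⟨hpN, w, hw, h₁, h₂⟩ := mem_filter.1 hp
        refine single_le_sum (f := fun _ => (f p.1 - f p.2) ^ 2) (fun _ _ => sq_nonneg _)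
          (mem_filter.2 ⟨mem_biUnion.2 ⟨p.1, (mem_product.1 hpN).1, ?_⟩, h₁, h₂⟩)
        exact mem_filter.2 ⟨(G.mem_neighborFinset _ _).2 h₁, hw⟩
    _ = ∑ w ∈ Z, ∑ p ∈ N ×ˢ N with
          ShareNeighborInSphereTwo G x p.1 p.2 ∧ G.Adj p.1 w ∧ G.Adj p.2 w,
          (f p.1 - f p.2) ^ 2 := by
        refine sum_comm' fun p w => ?_
        simp only [mem_filter]
        tauto
    _ ≤ ∑ w ∈ Z, ∑ p ∈ M w ×ˢ M w, (f p.1 - f p.2) ^ 2 := by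
        refine sum_le_sum fun w _ => sum_le_sum_of_subset_of_nonneg (fun p hp => ?_)
          fun _ _ _ => sq_nonneg _
        obtain ⟨hpN, -, h₁, h₂⟩ := mem_filter.1 hp
        exact mem_product.2 ⟨mem_filter.2 ⟨(mem_product.1 hpN).1, h₁⟩,
          mem_filter.2 ⟨(mem_product.1 hpN).2, h₂⟩⟩
    _ ≤ ∑ w ∈ Z, ∑ y ∈ M w, (f w + f x - 2 * f y) ^ 2 := by
        refine sum_le_sum fun w hw => ?_
        rw [sum_product]
        exact sum_sum_sq_sub_le_of_card_le_two (hM w hw) f _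
    _ = ∑ y ∈ N, ∑ w ∈ G.neighborFinset y with G.dist x w = 2, (f w + f x - 2 * f y) ^ 2 := by
        refine sum_comm' fun w y => ?_
        simp only [M, Z, mem_filter, mem_biUnion, SimpleGraph.mem_neighborFinset]
        exact ⟨fun ⟨⟨_, _, _, hw⟩, hy, hyw⟩ => ⟨⟨hyw, hw⟩, hy⟩,
          fun ⟨⟨hyw, hw⟩, hy⟩ => ⟨⟨y, hy, hyw, hw⟩, hy, hyw⟩⟩

theorem sum_filter_not_shareNeighborInSphereTwo_le {x : V}
    (hbad : ∀ y ∈ G.neighborFinset x,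
      #{u ∈ G.neighborFinset x | ¬ShareNeighborInSphereTwo G x y u} ≤ 1)
    (f : V → ℝ) :
    ∑ p ∈ G.neighborFinset x ×ˢ G.neighborFinset x with ¬ShareNeighborInSphereTwo G x p.1 p.2,
        (f p.1 - f p.2) ^ 2
      ≤ 4 * ∑ y ∈ G.neighborFinset x, (f y - f x) ^ 2 := by
  set N := G.neighborFinset x
  set P := {p ∈ N ×ˢ N | ¬ShareNeighborInSphereTwo G x p.1 p.2}
  have hpartner : ∀ p ∈ P, ∀ q ∈ P, p.1 = q.1 → p.2 = q.2 := by
    intro p hp q hq h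
    obtain ⟨hpN, hp⟩ := mem_filter.1 hp
    obtain ⟨hqN, hq⟩ := mem_filter.1 hq
    rw [mem_product] at hpN hqN
    exact card_le_one.1 (hbad p.1 hpN.1) _ (mem_filter.2 ⟨hpN.2, hp⟩) _
      (mem_filter.2 ⟨hqN.2, h ▸ hq⟩)
  have hswap : ∀ p ∈ P, p.swap ∈ P := fun p hp => by
    obtain ⟨hpN, hp⟩ := mem_filter.1 hp
    exact mem_filter.2 ⟨mem_product.2 (mem_product.1 hpN).symm,
      shareNeighborInSphereTwo_comm.not.1 hp⟩
  have h₁ : Set.InjOn Prod.fst (P : Set (V × V)) := fun p hp q hq h =>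
    Prod.ext h (hpartner p hp q hq h)
  have h₂ : Set.InjOn Prod.snd (P : Set (V × V)) := fun p hp q hq h =>
    Prod.ext (hpartner _ (hswap p hp) _ (hswap q hq) h) h
  simpa using sum_sq_sub_le_of_injOn (filter_subset _ _) h₁ h₂ fun y => f y - f x

theorem sum_sum_sq_sub_le_sum_sum_sq (hconn : G.Connected)
    {d : ℕ} (hreg : G.IsRegularOfDegree d) {x : V}
    (htri : ∀ u v : V, G.Adj x u → G.Adj x v → ¬G.Adj u v)
    (hin : ∀ z : V, G.dist x z = 2 → (G.neighborSet z ∩ G.neighborSet x).ncard ≤ 2)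
    (hk : ∀ y : V, G.Adj x y → kappa G d 0 x y = 0) (f : V → ℝ) :
    ∑ y ∈ G.neighborFinset x, ∑ u ∈ G.neighborFinset x, (f y - f u) ^ 2
      ≤ ∑ y ∈ G.neighborFinset x, ∑ w ∈ G.neighborFinset y, (f w + f x - 2 * f y) ^ 2 := by
  set N := G.neighborFinset x
  have hbad : ∀ y ∈ N, #{u ∈ N | ¬ShareNeighborInSphereTwo G x y u} ≤ 1 := fun y hy =>
    have hxy := (G.mem_neighborFinset x y).1 hy
    card_filter_not_shareNeighborInSphereTwo_le_one hconn hreg htri hxy (hk y hxy)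
  have hinner : ∀ y ∈ N, 4 * (f y - f x) ^ 2
      + ∑ w ∈ G.neighborFinset y with G.dist x w = 2, (f w + f x - 2 * f y) ^ 2
      ≤ ∑ w ∈ G.neighborFinset y, (f w + f x - 2 * f y) ^ 2 := fun y hy => by
    have hxy : x ∈ G.neighborFinset y :=
      (G.mem_neighborFinset y x).2 ((G.mem_neighborFinset x y).1 hy).symm
    have hnot : x ∉ {w ∈ G.neighborFinset y | G.dist x w = 2} := by simp
    calc _ = ∑ w ∈ insert x {w ∈ G.neighborFinset y | G.dist x w = 2},
          (f w + f x - 2 * f y) ^ 2 := by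
          rw [sum_insert hnot]
          ring
      _ ≤ _ := sum_le_sum_of_subset_of_nonneg (insert_subset hxy (filter_subset _ _))
          fun _ _ _ => sq_nonneg _
  rw [← sum_product' N N fun y u => (f y - f u) ^ 2,
    ← sum_filter_add_sum_filter_not _ fun p => ShareNeighborInSphereTwo G x p.1 p.2]
  have hlinked := sum_filter_shareNeighborInSphereTwo_le hin f
  have hunlinked := sum_filter_not_shareNeighborInSphereTwo_le hbad f
  have hright := sum_le_sum hinner
  rw [sum_add_distrib, ← mul_sum] at hright
  linarith

end LocallyFinite

/-- Let `x` be a vertex of a simple, connected, `d`-regular graph, not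
contained in a triangle and with `d_x^-(z) ≤ 2` for all `z ∈ S₂(x)`. If `κ₀(x,y) = 0` for
all `y ∈ S₁(x)`, then the Bakry–Émery curvature satisfies `K_∞(x) ≥ 0` (that is, `0` is a
lower curvature bound at `x`). -/
theorem stmt_13 (G : SimpleGraph V) [G.LocallyFinite] (hconn : G.Connected)
    (d : ℕ) (hreg : G.IsRegularOfDegree d) (x : V)
    (htri : ∀ u v : V, G.Adj x u → G.Adj x v → ¬G.Adj u v)
    (hin : ∀ z : V, G.dist x z = 2 → (G.neighborSet z ∩ G.neighborSet x).ncard ≤ 2)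
    (hk : ∀ y : V, G.Adj x y → kappa G d 0 x y = 0) :
    0 ∈ curvBounds G x := by
  intro f
  have hid := four_mul_gamma2Op hreg f x
  have hle := sum_sum_sq_sub_le_sum_sum_sq hconn hreg htri hin hk f
  rw [zero_mul]
  linarith
end

section
/- Let G be a d_G-regular graph that is Ricci flat at a vertex x and H a d_H-regular graph that is Ricci flat at a vertex y. Then the tensor product G⊗H, the Cartesian product G×H, and the strong product G⊠H are each Ricci flat at the vertex (x,y). Moreover, the same holds with 'Ricci flat' replaced throughout by '(R)-Ricci flat', by '(S)-Ricci flat', and by '(RS)-Ricci flat'. -/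
open Filter
open scoped Classical

variable {V : Type*}

/-- The tensor product `G ⊗ H`: only diagonal edges. -/
def tensorProd {α β : Type*} (G : SimpleGraph α) (H : SimpleGraph β) : SimpleGraph (α × β) where
  Adj p q := G.Adj p.1 q.1 ∧ H.Adj p.2 q.2
  symm := ⟨fun p q h => ⟨h.1.symm, h.2.symm⟩⟩
  loopless := ⟨fun p h => G.loopless.irrefl p.1 h.1⟩

/-- The Cartesian product `G × H`: horizontal and vertical edges. -/
def cartProd {α β : Type*} (G : SimpleGraph α) (H : SimpleGraph β) : SimpleGraph (α × β) where
  Adj p q := (G.Adj p.1 q.1 ∧ p.2 = q.2) ∨ (p.1 = q.1 ∧ H.Adj p.2 q.2)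
  symm := by
    constructor
    rintro p q (⟨h1, h2⟩ | ⟨h1, h2⟩)
    · exact Or.inl ⟨h1.symm, h2.symm⟩
    · exact Or.inr ⟨h1.symm, h2.symm⟩
  loopless := by
    constructor
    rintro p (⟨h1, -⟩ | ⟨-, h2⟩)
    · exact G.loopless.irrefl p.1 h1
    · exact H.loopless.irrefl p.2 h2

/-- The strong product `G ⊠ H`: horizontal, vertical and diagonal edges. -/
def strongProd {α β : Type*} (G : SimpleGraph α) (H : SimpleGraph β) : SimpleGraph (α × β) where
  Adj p q := (G.Adj p.1 q.1 ∧ p.2 = q.2) ∨ (p.1 = q.1 ∧ H.Adj p.2 q.2) ∨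
    (G.Adj p.1 q.1 ∧ H.Adj p.2 q.2)
  symm := by
    constructor
    rintro p q (⟨h1, h2⟩ | ⟨h1, h2⟩ | ⟨h1, h2⟩)
    · exact Or.inl ⟨h1.symm, h2.symm⟩
    · exact Or.inr (Or.inl ⟨h1.symm, h2.symm⟩)
    · exact Or.inr (Or.inr ⟨h1.symm, h2.symm⟩)
  loopless := by
    constructor
    rintro p (⟨h1, -⟩ | ⟨-, h2⟩ | ⟨h1, -⟩)
    · exact G.loopless.irrefl p.1 h1
    · exact H.loopless.irrefl p.2 h2
    · exact G.loopless.irrefl p.1 h1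

/-! The maps of a product are assembled from those of the factors: `η i × θ j` on `G ⊗ H`,
`η i × id` and `id × θ j` on `G × H`, and all of these on `G ⊠ H`. The unit ball of each
product lies in `B₁(x) × B₁(y)`, so adjacency and distinctness are checked coordinatewise;
condition (iii) splits into the conditions of the factors because the range of a product
(resp. disjoint union) of families is the product (resp. union) of their ranges, and the extra
conditions (R) and (S) hold coordinatewise. -/

open Function

section Ball

lemma closedBall1_mono {G G' : SimpleGraph V} (h : G ≤ G') (x : V) :
    closedBall1 G x ⊆ closedBall1 G' x :=
  Set.insert_subset_insert fun _ hu => h hu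

variable {α β : Type*} {G : SimpleGraph α} {H : SimpleGraph β}

lemma closedBall1_strongProd (x : α) (y : β) :
    closedBall1 (strongProd G H) (x, y) = closedBall1 G x ×ˢ closedBall1 H y := by
  ext ⟨u, v⟩
  simp only [closedBall1, strongProd, Set.mem_insert_iff, SimpleGraph.mem_neighborSet,
    Set.mem_prod, Prod.mk.injEq]
  tauto

lemma tensorProd_le_strongProd : tensorProd G H ≤ strongProd G H :=
  fun _ _ h => Or.inr (Or.inr h)

lemma cartProd_le_strongProd : cartProd G H ≤ strongProd G H :=
  fun _ _ h => h.imp_right Or.inl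

lemma mem_closedBall1_of_le_strongProd {K : SimpleGraph (α × β)} (hK : K ≤ strongProd G H)
    {x : α} {y : β} {u : α × β} (hu : u ∈ closedBall1 K (x, y)) :
    u.1 ∈ closedBall1 G x ∧ u.2 ∈ closedBall1 H y := by
  rw [← Set.mem_prod, ← closedBall1_strongProd]
  exact closedBall1_mono hK _ hu

end Ball

section Family

variable {ι ι' : Type*}

/-- `IsRicciFlatMaps` for an arbitrary index type, with condition (ii) read as injectivity of
`i ↦ η i u`. -/
structure IsRicciFlatFamily (G : SimpleGraph V) (x : V) (η : ι → V → V) : Prop where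
  adj : ∀ i, ∀ u ∈ closedBall1 G x, G.Adj u (η i u)
  injective : ∀ u ∈ closedBall1 G x, Injective (η · u)
  range_comm : ∀ i, Set.range (fun j => η j (η i x)) = Set.range (fun j => η i (η j x))

def IsInvolutiveAt (η : ι → V → V) (x : V) : Prop := ∀ i, η i (η i x) = x

def CommutesAt (η : ι → V → V) (x : V) : Prop := ∀ i j, η j (η i x) = η i (η j x)

variable {G : SimpleGraph V} {x : V} {η : ι → V → V}

lemma isRicciFlatMaps_iff {d : ℕ} {η : Fin d → V → V} :
    IsRicciFlatMaps G d x η ↔ IsRicciFlatFamily G x η := by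
  refine ⟨fun ⟨adj, ne, range_comm⟩ => ⟨adj, fun u hu i j hij => ?_, range_comm⟩,
    fun ⟨adj, inj, range_comm⟩ => ⟨adj, fun i j hij u hu h => hij (inj u hu h), range_comm⟩⟩
  by_contra hne
  exact ne i j hne u hu hij

lemma IsRicciFlatFamily.comp_equiv (h : IsRicciFlatFamily G x η) (e : ι' ≃ ι) :
    IsRicciFlatFamily G x (η ∘ e) where
  adj k := h.adj (e k)
  injective u hu := (h.injective u hu).comp e.injective
  range_comm k :=
    (e.surjective.range_comp _).trans <|
      (h.range_comm (e k)).trans (e.surjective.range_comp _).symm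

lemma IsRicciFlatFamily.apply_ne (h : IsRicciFlatFamily G x η) (i : ι) {u : V}
    (hu : u ∈ closedBall1 G x) : η i u ≠ u :=
  (h.adj i u hu).ne'

end Family

section RangeCongr

variable {ι κ γ δ : Type*}

lemma Set.range_comp_congr {f f' : ι → γ} (g : γ → δ) (h : Set.range f = Set.range f') :
    Set.range (fun i => g (f i)) = Set.range (fun i => g (f' i)) := by
  simp only [Set.range_comp', h]

lemma Set.range_prodMap_congr {f f' : ι → γ} {g g' : κ → δ} (hf : Set.range f = Set.range f')
    (hg : Set.range g = Set.range g') :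
    Set.range (Prod.map f g) = Set.range (Prod.map f' g') := by
  rw [Set.range_prodMap, Set.range_prodMap, hf, hg]

lemma Set.range_sum_congr {f f' : ι ⊕ κ → γ}
    (hl : Set.range (f ∘ Sum.inl) = Set.range (f' ∘ Sum.inl))
    (hr : Set.range (f ∘ Sum.inr) = Set.range (f' ∘ Sum.inr)) : Set.range f = Set.range f' := by
  rw [← Sum.elim_comp_inl_inr f, ← Sum.elim_comp_inl_inr f', Set.Sum.elim_range,
    Set.Sum.elim_range, hl, hr]

end RangeCongr

section Products

variable {α β ι κ : Type*} {G : SimpleGraph α} {H : SimpleGraph β} {x : α} {y : β}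
  {η : ι → α → α} {θ : κ → β → β}

def tensorFamily (η : ι → α → α) (θ : κ → β → β) (k : ι × κ) : α × β → α × β :=
  Prod.map (η k.1) (θ k.2)

def cartFamily (η : ι → α → α) (θ : κ → β → β) : ι ⊕ κ → α × β → α × β :=
  Sum.elim (fun i => Prod.map (η i) id) (fun j => Prod.map id (θ j))

def strongFamily (η : ι → α → α) (θ : κ → β → β) : (ι ⊕ κ) ⊕ ι × κ → α × β → α × β :=
  Sum.elim (cartFamily η θ) (tensorFamily η θ)

lemma injective_tensorFamily_apply (hη : IsRicciFlatFamily G x η)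
    (hθ : IsRicciFlatFamily H y θ) {u : α × β} (hu₁ : u.1 ∈ closedBall1 G x)
    (hu₂ : u.2 ∈ closedBall1 H y) :
    Injective (tensorFamily η θ · u) :=
  (hη.injective u.1 hu₁).prodMap (hθ.injective u.2 hu₂)

lemma injective_cartFamily_apply (hη : IsRicciFlatFamily G x η)
    (hθ : IsRicciFlatFamily H y θ) {u : α × β} (hu₁ : u.1 ∈ closedBall1 G x)
    (hu₂ : u.2 ∈ closedBall1 H y) :
    Injective (cartFamily η θ · u) := by
  rw [← Sum.elim_comp_inl_inr (cartFamily η θ · u)]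
  exact Injective.sumElim (fun i i' h => hη.injective u.1 hu₁ (congrArg Prod.fst h))
    (fun j j' h => hθ.injective u.2 hu₂ (congrArg Prod.snd h))
    fun i j h => hη.apply_ne i hu₁ (congrArg Prod.fst h)

lemma injective_strongFamily_apply (hη : IsRicciFlatFamily G x η)
    (hθ : IsRicciFlatFamily H y θ) {u : α × β} (hu₁ : u.1 ∈ closedBall1 G x)
    (hu₂ : u.2 ∈ closedBall1 H y) :
    Injective (strongFamily η θ · u) := by
  rw [← Sum.elim_comp_inl_inr (strongFamily η θ · u)]
  refine Injective.sumElim (injective_cartFamily_apply hη hθ hu₁ hu₂)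
    (injective_tensorFamily_apply hη hθ hu₁ hu₂) ?_
  rintro (i | j) k h
  · exact hθ.apply_ne k.2 hu₂ (congrArg Prod.snd h).symm
  · exact hη.apply_ne k.1 hu₁ (congrArg Prod.fst h).symm

lemma IsRicciFlatFamily.tensor (hη : IsRicciFlatFamily G x η) (hθ : IsRicciFlatFamily H y θ) :
    IsRicciFlatFamily (tensorProd G H) (x, y) (tensorFamily η θ) where
  adj k u hu := by
    obtain ⟨hu₁, hu₂⟩ := mem_closedBall1_of_le_strongProd tensorProd_le_strongProd hu
    exact ⟨hη.adj k.1 u.1 hu₁, hθ.adj k.2 u.2 hu₂⟩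
  injective u hu :=
    have hu' := mem_closedBall1_of_le_strongProd tensorProd_le_strongProd hu
    injective_tensorFamily_apply hη hθ hu'.1 hu'.2
  range_comm k := Set.range_prodMap_congr (hη.range_comm k.1) (hθ.range_comm k.2)

lemma IsRicciFlatFamily.cart (hη : IsRicciFlatFamily G x η) (hθ : IsRicciFlatFamily H y θ) :
    IsRicciFlatFamily (cartProd G H) (x, y) (cartFamily η θ) where
  adj k u hu := by
    obtain ⟨hu₁, hu₂⟩ := mem_closedBall1_of_le_strongProd cartProd_le_strongProd hu
    rcases k with i | j
    · exact Or.inl ⟨hη.adj i u.1 hu₁, rfl⟩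
    · exact Or.inr ⟨rfl, hθ.adj j u.2 hu₂⟩
  injective u hu :=
    have hu' := mem_closedBall1_of_le_strongProd cartProd_le_strongProd hu
    injective_cartFamily_apply hη hθ hu'.1 hu'.2
  range_comm k := by
    rcases k with a | b
    · exact Set.range_sum_congr (Set.range_comp_congr (·, y) (hη.range_comm a)) rfl
    · exact Set.range_sum_congr rfl (Set.range_comp_congr (x, ·) (hθ.range_comm b))

lemma IsRicciFlatFamily.strong (hη : IsRicciFlatFamily G x η)
    (hθ : IsRicciFlatFamily H y θ) :
    IsRicciFlatFamily (strongProd G H) (x, y) (strongFamily η θ) where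
  adj k u hu := by
    obtain ⟨hu₁, hu₂⟩ := mem_closedBall1_of_le_strongProd le_rfl hu
    rcases k with (i | j) | k
    · exact Or.inl ⟨hη.adj i u.1 hu₁, rfl⟩
    · exact Or.inr (Or.inl ⟨rfl, hθ.adj j u.2 hu₂⟩)
    · exact Or.inr (Or.inr ⟨hη.adj k.1 u.1 hu₁, hθ.adj k.2 u.2 hu₂⟩)
  injective u hu :=
    have hu' := mem_closedBall1_of_le_strongProd le_rfl hu
    injective_strongFamily_apply hη hθ hu'.1 hu'.2
  range_comm k := by
    rcases k with (a | b) | ⟨a, b⟩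
    · exact Set.range_sum_congr
        (Set.range_sum_congr (Set.range_comp_congr (·, y) (hη.range_comm a)) rfl)
        (Set.range_prodMap_congr (g := (θ · y)) (hη.range_comm a) rfl)
    · exact Set.range_sum_congr
        (Set.range_sum_congr rfl (Set.range_comp_congr (x, ·) (hθ.range_comm b)))
        (Set.range_prodMap_congr (f := (η · x)) rfl (hθ.range_comm b))
    · exact Set.range_sum_congr
        (Set.range_sum_congr (Set.range_comp_congr (·, θ b y) (hη.range_comm a))
          (Set.range_comp_congr (η a x, ·) (hθ.range_comm b)))
        (Set.range_prodMap_congr (hη.range_comm a) (hθ.range_comm b))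

lemma IsInvolutiveAt.tensor (hη : IsInvolutiveAt η x) (hθ : IsInvolutiveAt θ y) :
    IsInvolutiveAt (tensorFamily η θ) (x, y) :=
  fun k => Prod.ext (hη k.1) (hθ k.2)

lemma IsInvolutiveAt.cart (hη : IsInvolutiveAt η x) (hθ : IsInvolutiveAt θ y) :
    IsInvolutiveAt (cartFamily η θ) (x, y) :=
  Sum.rec (fun i => Prod.ext (hη i) rfl) (fun j => Prod.ext rfl (hθ j))

lemma IsInvolutiveAt.strong (hη : IsInvolutiveAt η x) (hθ : IsInvolutiveAt θ y) :
    IsInvolutiveAt (strongFamily η θ) (x, y) :=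
  Sum.rec (hη.cart hθ) (hη.tensor hθ)

lemma CommutesAt.strong (hη : CommutesAt η x) (hθ : CommutesAt θ y) :
    CommutesAt (strongFamily η θ) (x, y) := by
  rintro ((i | j) | ⟨i, j⟩) ((i' | j') | ⟨i', j'⟩) <;>
    exact Prod.ext (by first | rfl | exact hη _ _) (by first | rfl | exact hθ _ _)

lemma CommutesAt.cart (hη : CommutesAt η x) (hθ : CommutesAt θ y) :
    CommutesAt (cartFamily η θ) (x, y) :=
  fun k m => hη.strong hθ (.inl k) (.inl m)

lemma CommutesAt.tensor (hη : CommutesAt η x) (hθ : CommutesAt θ y) :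
    CommutesAt (tensorFamily η θ) (x, y) :=
  fun k m => hη.strong hθ (.inr k) (.inr m)

end Products

section Transfer

variable {α β γ ι : Type*}

def InheritsRicciFlatness (K : SimpleGraph γ) (d : ℕ) (z : γ) (G : SimpleGraph α) (dG : ℕ)
    (x : α) (H : SimpleGraph β) (dH : ℕ) (y : β) : Prop :=
  (RicciFlatAt G dG x → RicciFlatAt H dH y → RicciFlatAt K d z) ∧
  (RRicciFlatAt G dG x → RRicciFlatAt H dH y → RRicciFlatAt K d z) ∧
  (SRicciFlatAt G dG x → SRicciFlatAt H dH y → SRicciFlatAt K d z) ∧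
  (RSRicciFlatAt G dG x → RSRicciFlatAt H dH y → RSRicciFlatAt K d z)

lemma InheritsRicciFlatness.of_family {K : SimpleGraph γ} {d : ℕ} {z : γ} {G : SimpleGraph α}
    {dG : ℕ} {x : α} {H : SimpleGraph β} {dH : ℕ} {y : β} (e : Fin d ≃ ι)
    (Φ : (Fin dG → α → α) → (Fin dH → β → β) → ι → γ → γ)
    (flat : ∀ {η θ}, IsRicciFlatFamily G x η → IsRicciFlatFamily H y θ →
      IsRicciFlatFamily K z (Φ η θ))
    (invol : ∀ {η θ}, IsInvolutiveAt η x → IsInvolutiveAt θ y → IsInvolutiveAt (Φ η θ) z)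
    (comm : ∀ {η θ}, CommutesAt η x → CommutesAt θ y → CommutesAt (Φ η θ) z) :
    InheritsRicciFlatness K d z G dG x H dH y := by
  simp only [InheritsRicciFlatness, RicciFlatAt, RRicciFlatAt, SRicciFlatAt, RSRicciFlatAt,
    isRicciFlatMaps_iff]
  refine ⟨?_, ?_, ?_, ?_⟩
  · rintro ⟨η, hη⟩ ⟨θ, hθ⟩
    exact ⟨_, (flat hη hθ).comp_equiv e⟩
  · rintro ⟨η, hη, hη_inv⟩ ⟨θ, hθ, hθ_inv⟩
    exact ⟨_, (flat hη hθ).comp_equiv e, fun k => invol hη_inv hθ_inv (e k)⟩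
  · rintro ⟨η, hη, hη_comm⟩ ⟨θ, hθ, hθ_comm⟩
    exact ⟨_, (flat hη hθ).comp_equiv e, fun k m => comm hη_comm hθ_comm (e k) (e m)⟩
  · rintro ⟨η, hη, hη_inv, hη_comm⟩ ⟨θ, hθ, hθ_inv, hθ_comm⟩
    exact ⟨_, (flat hη hθ).comp_equiv e, fun k => invol hη_inv hθ_inv (e k),
      fun k m => comm hη_comm hθ_comm (e k) (e m)⟩

variable (G : SimpleGraph α) (H : SimpleGraph β) (dG dH : ℕ) (x : α) (y : β)

lemma inheritsRicciFlatness_tensorProd :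
    InheritsRicciFlatness (tensorProd G H) (dG * dH) (x, y) G dG x H dH y :=
  .of_family finProdFinEquiv.symm tensorFamily IsRicciFlatFamily.tensor IsInvolutiveAt.tensor
    CommutesAt.tensor

lemma inheritsRicciFlatness_cartProd :
    InheritsRicciFlatness (cartProd G H) (dG + dH) (x, y) G dG x H dH y :=
  .of_family finSumFinEquiv.symm cartFamily IsRicciFlatFamily.cart IsInvolutiveAt.cart
    CommutesAt.cart

lemma inheritsRicciFlatness_strongProd :
    InheritsRicciFlatness (strongProd G H) (dG + dH + dG * dH) (x, y) G dG x H dH y :=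
  .of_family (finSumFinEquiv.symm.trans (finSumFinEquiv.symm.sumCongr finProdFinEquiv.symm))
    strongFamily IsRicciFlatFamily.strong IsInvolutiveAt.strong CommutesAt.strong

end Transfer

theorem stmt_15_general {α β : Type*} (G : SimpleGraph α) (H : SimpleGraph β) (dG dH : ℕ)
    (x : α) (y : β) :
    (RicciFlatAt G dG x → RicciFlatAt H dH y →
      RicciFlatAt (tensorProd G H) (dG * dH) (x, y) ∧
      RicciFlatAt (cartProd G H) (dG + dH) (x, y) ∧
      RicciFlatAt (strongProd G H) (dG + dH + dG * dH) (x, y)) ∧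
    (RRicciFlatAt G dG x → RRicciFlatAt H dH y →
      RRicciFlatAt (tensorProd G H) (dG * dH) (x, y) ∧
      RRicciFlatAt (cartProd G H) (dG + dH) (x, y) ∧
      RRicciFlatAt (strongProd G H) (dG + dH + dG * dH) (x, y)) ∧
    (SRicciFlatAt G dG x → SRicciFlatAt H dH y →
      SRicciFlatAt (tensorProd G H) (dG * dH) (x, y) ∧
      SRicciFlatAt (cartProd G H) (dG + dH) (x, y) ∧
      SRicciFlatAt (strongProd G H) (dG + dH + dG * dH) (x, y)) ∧
    (RSRicciFlatAt G dG x → RSRicciFlatAt H dH y →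
      RSRicciFlatAt (tensorProd G H) (dG * dH) (x, y) ∧
      RSRicciFlatAt (cartProd G H) (dG + dH) (x, y) ∧
      RSRicciFlatAt (strongProd G H) (dG + dH + dG * dH) (x, y)) := by
  obtain ⟨tensor, tensorR, tensorS, tensorRS⟩ := inheritsRicciFlatness_tensorProd G H dG dH x y
  obtain ⟨cart, cartR, cartS, cartRS⟩ := inheritsRicciFlatness_cartProd G H dG dH x y
  obtain ⟨strong, strongR, strongS, strongRS⟩ := inheritsRicciFlatness_strongProd G H dG dH x y
  exact ⟨fun hx hy => ⟨tensor hx hy, cart hx hy, strong hx hy⟩,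
    fun hx hy => ⟨tensorR hx hy, cartR hx hy, strongR hx hy⟩,
    fun hx hy => ⟨tensorS hx hy, cartS hx hy, strongS hx hy⟩,
    fun hx hy => ⟨tensorRS hx hy, cartRS hx hy, strongRS hx hy⟩⟩

/-- If `G` is `d_G`-regular and Ricci flat at `x`, and `H` is
`d_H`-regular and Ricci flat at `y`, then the tensor product, the Cartesian product and the
strong product are Ricci flat at `(x,y)`; and likewise for (R)-, (S)- and (RS)-Ricci
flatness. -/
theorem stmt_15 {α β : Type*} (G : SimpleGraph α) (H : SimpleGraph β)
    [G.LocallyFinite] [H.LocallyFinite] (dG dH : ℕ)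
    (hG : G.IsRegularOfDegree dG) (hH : H.IsRegularOfDegree dH) (x : α) (y : β) :
    (RicciFlatAt G dG x → RicciFlatAt H dH y →
      RicciFlatAt (tensorProd G H) (dG * dH) (x, y) ∧
      RicciFlatAt (cartProd G H) (dG + dH) (x, y) ∧
      RicciFlatAt (strongProd G H) (dG + dH + dG * dH) (x, y)) ∧
    (RRicciFlatAt G dG x → RRicciFlatAt H dH y →
      RRicciFlatAt (tensorProd G H) (dG * dH) (x, y) ∧
      RRicciFlatAt (cartProd G H) (dG + dH) (x, y) ∧
      RRicciFlatAt (strongProd G H) (dG + dH + dG * dH) (x, y)) ∧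
    (SRicciFlatAt G dG x → SRicciFlatAt H dH y →
      SRicciFlatAt (tensorProd G H) (dG * dH) (x, y) ∧
      SRicciFlatAt (cartProd G H) (dG + dH) (x, y) ∧
      SRicciFlatAt (strongProd G H) (dG + dH + dG * dH) (x, y)) ∧
    (RSRicciFlatAt G dG x → RSRicciFlatAt H dH y →
      RSRicciFlatAt (tensorProd G H) (dG * dH) (x, y) ∧
      RSRicciFlatAt (cartProd G H) (dG + dH) (x, y) ∧
      RSRicciFlatAt (strongProd G H) (dG + dH + dG * dH) (x, y)) :=
  stmt_15_general G H dG dH x y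
end
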